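/- arXiv:2408.10606 — 5 statements merged into one kernel-verified Lean document; each statement's English description precedes it below -/
import Mathlib

section
/- Let Γ be a finite simple graph that is not complete and has a dominating vertex x. Then Γ is minimally edge connected if and only if x is the only dominating vertex of Γ and the graph Γ − {x} obtained by deleting x is regular. -/
/-- The degree of a vertex: the number of its neighbours. -/
noncomputable def gDeg {V : Type*} (G : SimpleGraph V) (v : V) : ℕ :=
  (G.neighborSet v).ncard

/-- The minimum degree of a graph. -/
noncomputable def minDeg {V : Type*} (G : SimpleGraph V) : ℕ :=
  sInf (Set.range (gDeg G))

/-- The edge connectivity: the minimum size of a set of edges whose removal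
disconnects the graph. -/
noncomputable def edgeConn {V : Type*} (G : SimpleGraph V) : ℕ :=
  sInf {n : ℕ | ∃ S : Set (Sym2 V), S ⊆ G.edgeSet ∧ S.ncard = n ∧
    ¬ (G.deleteEdges S).Connected}

/-- The vertex connectivity: the minimum size of a set of vertices whose removal
disconnects the graph or leaves a single vertex. -/
noncomputable def vertexConn {V : Type*} (G : SimpleGraph V) : ℕ :=
  sInf {n : ℕ | ∃ S : Set V, S.ncard = n ∧ Sᶜ.Nonempty ∧
    (¬ (G.induce Sᶜ).Preconnected ∨ Sᶜ.ncard = 1)}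

/-- A graph is minimally edge connected if deleting any edge decreases the
edge connectivity by one. -/
def MinEdgeConnected {V : Type*} (G : SimpleGraph V) : Prop :=
  ∀ e ∈ G.edgeSet, edgeConn (G.deleteEdges {e}) = edgeConn G - 1

/-- A graph is minimally connected if deleting any edge decreases the
vertex connectivity by one. -/
def MinConnected {V : Type*} (G : SimpleGraph V) : Prop :=
  ∀ e ∈ G.edgeSet, vertexConn (G.deleteEdges {e}) = vertexConn G - 1

/-- The power graph of a group: distinct `x, y` are adjacent iff one is a
natural power of the other. -/
def powerGraph (G : Type*) [Group G] : SimpleGraph G :=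
  SimpleGraph.fromRel (fun x y => ∃ m : ℕ, y = x ^ m)

/-- The enhanced power graph of a group: distinct `x, y` are adjacent iff they
lie in a common cyclic subgroup. -/
def enhancedPowerGraph (G : Type*) [Group G] : SimpleGraph G :=
  SimpleGraph.fromRel
    (fun x y => ∃ z : G, x ∈ Subgroup.zpowers z ∧ y ∈ Subgroup.zpowers z)

/-- The order superpower graph of a group: distinct `x, y` are adjacent iff the
order of one divides the order of the other. -/
def superpowerGraph (G : Type*) [Group G] : SimpleGraph G :=
  SimpleGraph.fromRel (fun x y => orderOf x ∣ orderOf y)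

/-!
With a dominating vertex `x`, the edge connectivity is the minimum degree `δ`. If deleting a
set of edges separates a nonempty set `B` of vertices from `x`, then either `|B| ≤ δ` and
every vertex of `B` keeps at least `δ - (|B| - 1)` neighbours outside `B`, or `|B| > δ` and
the edges from `x` into `B` alone number at least `|B| - 1 ≥ δ`. The count only needs `x`
to be adjacent to all but at most one vertex, so it survives the deletion of one edge.

As the graph is not complete, `δ < deg x`. Deleting an edge `xv` with `deg v > δ` keeps the
minimum degree, hence the edge connectivity, at `δ`; deleting an edge with an endpoint of
degree `δ` lowers both to `δ - 1`. So the graph is minimally edge connected iff every vertex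
other than `x` has degree `δ`, which says that `Γ - x` is regular and, since `δ < deg x`,
that no other vertex is dominating.
-/

open Finset SimpleGraph

section

variable {V : Type*} {G : SimpleGraph V}

lemma gDeg_eq_card_filter [Fintype V] [DecidableRel G.Adj] (v : V) :
    gDeg G v = #{w | G.Adj v w} := by
  rw [gDeg, Set.ncard_eq_toFinset_card', ← neighborFinset_eq_filter]
  rfl

lemma gDeg_pos_of_adj [Finite V] {v w : V} (h : G.Adj v w) : 0 < gDeg G v :=
  (Set.ncard_pos).2 ⟨w, h⟩

lemma gDeg_eq_card_sub_one [Fintype V] {x : V} (hx : ∀ y, y ≠ x → G.Adj x y) :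
    gDeg G x = Fintype.card V - 1 := by
  have : G.neighborSet x = {x}ᶜ := by
    ext w
    exact ⟨fun h => h.ne', hx w⟩
  rw [gDeg, this, Set.ncard_compl, Set.ncard_singleton, Nat.card_eq_fintype_card]

lemma gDeg_le_card_sub_two [Fintype V] {a b : V} (hab : a ≠ b) (h : ¬G.Adj a b) :
    gDeg G a ≤ Fintype.card V - 2 := by
  have hsub : G.neighborSet a ⊆ {a, b}ᶜ := by
    rintro w hw (rfl | rfl)
    exacts [G.loopless.irrefl _ hw, h hw]
  have := Set.ncard_le_ncard hsub
  rwa [Set.ncard_compl, Set.ncard_pair hab, Nat.card_eq_fintype_card] at this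

lemma gDeg_induce_compl_singleton {x : V} (v : ({x}ᶜ : Set V)) (h : G.Adj v x) :
    gDeg (G.induce {x}ᶜ) v = gDeg G v - 1 := by
  have hval : Subtype.val '' (G.induce {x}ᶜ).neighborSet v = G.neighborSet v \ {x} := by
    ext w
    simp [and_comm]
  rw [gDeg, ← Set.ncard_image_of_injective _ Subtype.val_injective, hval,
    Set.ncard_sdiff_singleton_of_mem (show x ∈ G.neighborSet v from h), gDeg]

lemma minDeg_le (v : V) : minDeg G ≤ gDeg G v :=
  Nat.sInf_le ⟨v, rfl⟩

lemma exists_gDeg_eq_minDeg [Nonempty V] : ∃ v, gDeg G v = minDeg G :=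
  Nat.sInf_mem (Set.range_nonempty _)

lemma le_minDeg [Nonempty V] {δ : ℕ} (h : ∀ v, δ ≤ gDeg G v) : δ ≤ minDeg G := by
  obtain ⟨v, hv⟩ := exists_gDeg_eq_minDeg (G := G)
  exact hv ▸ h v

lemma neighborSet_deleteEdges_self (v w : V) :
    (G.deleteEdges {s(v, w)}).neighborSet v = G.neighborSet v \ {w} := by
  ext u
  simp only [mem_neighborSet, deleteEdges_adj, Set.mem_sdiff, Set.mem_singleton_iff,
    Sym2.eq_iff, true_and, and_congr_right_iff]
  intro h
  exact ⟨fun h' hw => h' (Or.inl hw), fun h' => by rintro (rfl | ⟨rfl, rfl⟩) <;> simp_all⟩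

lemma neighborSet_deleteEdges_of_ne {p q v : V} (hp : v ≠ p) (hq : v ≠ q) :
    (G.deleteEdges {s(p, q)}).neighborSet v = G.neighborSet v := by
  ext u
  simp only [mem_neighborSet, deleteEdges_adj, Set.mem_singleton_iff, Sym2.eq_iff,
    and_iff_left_iff_imp]
  rintro - (⟨rfl, rfl⟩ | ⟨rfl, rfl⟩) <;> contradiction

lemma gDeg_deleteEdges_of_ne {p q v : V} (hp : v ≠ p) (hq : v ≠ q) :
    gDeg (G.deleteEdges {s(p, q)}) v = gDeg G v := by
  rw [gDeg, neighborSet_deleteEdges_of_ne hp hq, gDeg]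

lemma gDeg_deleteEdges_self {v w : V} (h : G.Adj v w) :
    gDeg (G.deleteEdges {s(v, w)}) v = gDeg G v - 1 := by
  unfold gDeg
  rw [neighborSet_deleteEdges_self,
    Set.ncard_sdiff_singleton_of_mem (show w ∈ G.neighborSet v from h)]

lemma gDeg_sub_one_le_gDeg_deleteEdges (e : Sym2 V) (v : V) :
    gDeg G v - 1 ≤ gDeg (G.deleteEdges {e}) v := by
  induction e with | h p q => ?_
  by_cases hp : v = p
  · subst hp
    unfold gDeg
    rw [neighborSet_deleteEdges_self]
    exact Set.pred_ncard_le_ncard_sdiff_singleton ..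
  by_cases hq : v = q
  · subst hq
    unfold gDeg
    rw [Sym2.eq_swap, neighborSet_deleteEdges_self]
    exact Set.pred_ncard_le_ncard_sdiff_singleton ..
  rw [gDeg_deleteEdges_of_ne hp hq]
  exact Nat.sub_le _ _

lemma edgeConn_le_gDeg {v w : V} (hvw : v ≠ w) : edgeConn G ≤ gDeg G v := by
  classical
  refine Nat.sInf_le ⟨G.incidenceSet v, G.incidenceSet_subset v, ?_, fun hconn => ?_⟩
  · rw [gDeg, ← Nat.card_coe_set_eq, ← Nat.card_coe_set_eq]
    exact Nat.card_congr (G.incidenceSetEquivNeighborSet v)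
  · obtain ⟨p⟩ := hconn.preconnected v w
    cases p with
    | nil => exact hvw rfl
    | cons h _ =>
      rw [deleteEdges_adj] at h
      exact h.2 ⟨h.1, Sym2.mem_mk_left _ _⟩

lemma edgeConn_deleteEdges_le {v w : V} (h : G.Adj v w) :
    edgeConn (G.deleteEdges {s(v, w)}) ≤ gDeg G v - 1 :=
  gDeg_deleteEdges_self h ▸ edgeConn_le_gDeg h.ne

section Cut

variable [DecidableRel G.Adj]

lemma card_interedges_eq_sum (s t : Finset V) :
    #(G.interedges s t) = ∑ a ∈ s, #{b ∈ t | G.Adj a b} := by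
  simp only [interedges_def, card_filter, sum_product]

variable [Fintype V] [DecidableEq V]

lemma gDeg_sub_le_card_filter_adj_compl {B : Finset V} {b : V} (hb : b ∈ B) :
    gDeg G b - (#B - 1) ≤ #{w ∈ Bᶜ | G.Adj b w} := by
  have hsplit : #{w ∈ B | G.Adj b w} + #{w ∈ Bᶜ | G.Adj b w} = gDeg G b := by
    rw [gDeg_eq_card_filter, ← card_union_of_disjoint
      (disjoint_filter_filter disjoint_compl_right), ← filter_union, union_compl]
  have hinside : #{w ∈ B | G.Adj b w} ≤ #B - 1 := by
    rw [← card_erase_of_mem hb]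
    refine card_le_card fun w hw => ?_
    rw [mem_filter] at hw
    exact mem_erase.2 ⟨hw.2.ne', hw.1⟩
  omega

lemma mul_le_card_interedges_compl {B : Finset V} {δ : ℕ} (h : ∀ b ∈ B, δ ≤ gDeg G b) :
    #B * (δ - (#B - 1)) ≤ #(G.interedges B Bᶜ) := by
  rw [card_interedges_eq_sum, ← smul_eq_mul, ← sum_const]
  exact sum_le_sum fun b hb =>
    (Nat.sub_le_sub_right (h b hb) _).trans (gDeg_sub_le_card_filter_adj_compl hb)

lemma card_sub_one_le_card_interedges_compl {B : Finset V} {x u : V} (hxB : x ∉ B)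
    (hx : ∀ w, w ≠ x → w ≠ u → G.Adj x w) : #B - 1 ≤ #(G.interedges B Bᶜ) :=
  calc #B - 1 ≤ #(B.erase u) := pred_card_le_card_erase
    _ = #((B.erase u).image (·, x)) :=
      (card_image_of_injective _ fun _ _ h => (Prod.mk.inj h).1).symm
    _ ≤ #(G.interedges B Bᶜ) := card_le_card fun p hp => by
      obtain ⟨w, hw, rfl⟩ := mem_image.1 hp
      obtain ⟨hwu, hwB⟩ := mem_erase.1 hw
      have hwx : w ≠ x := fun h => hxB (h ▸ hwB)
      exact G.mk_mem_interedges_iff.2 ⟨hwB, mem_compl.2 hxB, (hx w hwx hwu).symm⟩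

lemma le_card_interedges_compl {B : Finset V} {x u : V} {δ : ℕ} (hB : B.Nonempty)
    (hxB : x ∉ B) (hx : ∀ w, w ≠ x → w ≠ u → G.Adj x w) (hdeg : ∀ v, δ ≤ gDeg G v) :
    δ ≤ #(G.interedges B Bᶜ) := by
  rcases le_or_gt δ (#B - 1) with hlarge | hsmall
  · exact hlarge.trans (card_sub_one_le_card_interedges_compl hxB hx)
  refine le_trans ?_ (mul_le_card_interedges_compl fun b _ => hdeg b)
  obtain ⟨j, hj⟩ : ∃ j, #B = j + 1 := Nat.exists_eq_add_one.2 hB.card_pos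
  obtain ⟨m, rfl⟩ : ∃ m, δ = j + m := ⟨δ - j, by omega⟩
  have hm : 1 ≤ m := by omega
  rw [hj, Nat.add_sub_cancel, Nat.add_sub_cancel_left]
  nlinarith

lemma card_interedges_compl_le_ncard {B : Finset V} {S : Set (Sym2 V)}
    (hS : ∀ a b, a ∈ B → b ∉ B → G.Adj a b → s(a, b) ∈ S) :
    #(G.interedges B Bᶜ) ≤ S.ncard := by
  rw [← Set.ncard_coe_finset]
  refine Set.ncard_le_ncard_of_injOn (fun p => s(p.1, p.2)) (fun p hp => ?_) ?_
  · rw [mem_coe, mem_interedges_iff, mem_compl] at hp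
    exact hS _ _ hp.1 hp.2.1 hp.2.2
  · rintro p hp q hq hpq
    rw [mem_coe, mem_interedges_iff, mem_compl] at hp hq
    rcases Sym2.eq_iff.1 hpq with ⟨h₁, h₂⟩ | ⟨h₁, -⟩
    · exact Prod.ext h₁ h₂
    · exact absurd (h₁ ▸ hp.1) hq.2.1

lemma exists_finset_of_not_connected_deleteEdges (x : V) {S : Set (Sym2 V)}
    (h : ¬(G.deleteEdges S).Connected) :
    ∃ B : Finset V, B.Nonempty ∧ x ∉ B ∧
      ∀ a b, a ∈ B → b ∉ B → G.Adj a b → s(a, b) ∈ S := by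
  classical
  refine ⟨({v | ¬(G.deleteEdges S).Reachable x v} : Finset V), ?_, by simp,
    fun a b ha hb hab => ?_⟩
  · by_contra hB
    simp only [not_nonempty_iff_eq_empty, filter_eq_empty_iff, mem_univ, not_not,
      true_implies] at hB
    exact h (connected_iff_exists_forall_reachable _ |>.2 ⟨x, hB⟩)
  · simp only [mem_filter, mem_univ, true_and, not_not] at ha hb
    by_contra hS
    exact ha (hb.trans (deleteEdges_adj.2 ⟨hab.symm, by rwa [Sym2.eq_swap]⟩).reachable)

end Cut

lemma minDeg_le_edgeConn [Fintype V] {x u : V} (hx : ∀ w, w ≠ x → w ≠ u → G.Adj x w) :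
    minDeg G ≤ edgeConn G := by
  classical
  cases subsingleton_or_nontrivial V with
  | inl _ =>
    have : G.neighborSet x = ∅ :=
      Set.eq_empty_of_forall_notMem fun w h => h.ne (Subsingleton.elim _ _)
    exact (minDeg_le x).trans (by rw [gDeg, this, Set.ncard_empty]; exact Nat.zero_le _)
  | inr _ =>
    refine le_csInf ⟨_, G.edgeSet, subset_rfl, rfl, ?_⟩ fun n ⟨S, _, hn, hS⟩ => ?_
    · rw [deleteEdges_edgeSet, sdiff_self, connected_bot_iff]
      exact fun h => not_subsingleton V h.1
    · obtain ⟨B, hB, hxB, hcut⟩ := exists_finset_of_not_connected_deleteEdges x hS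
      exact hn ▸ (le_card_interedges_compl hB hxB hx minDeg_le).trans
        (card_interedges_compl_le_ncard hcut)

lemma minDeg_sub_one_le_minDeg_deleteEdges [Nonempty V] (e : Sym2 V) :
    minDeg G - 1 ≤ minDeg (G.deleteEdges {e}) :=
  le_minDeg fun v => (Nat.sub_le_sub_right (minDeg_le v) 1).trans
    (gDeg_sub_one_le_gDeg_deleteEdges e v)

lemma minDeg_le_minDeg_deleteEdges [Nonempty V] {p q : V} (hp : minDeg G < gDeg G p)
    (hq : minDeg G < gDeg G q) : minDeg G ≤ minDeg (G.deleteEdges {s(p, q)}) := by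
  refine le_minDeg fun v => ?_
  by_cases hv : v = p ∨ v = q
  · have := gDeg_sub_one_le_gDeg_deleteEdges (G := G) s(p, q) v
    rcases hv with rfl | rfl <;> omega
  · rw [not_or] at hv
    rw [gDeg_deleteEdges_of_ne hv.1 hv.2]
    exact minDeg_le v

lemma exists_forall_adj_deleteEdges {x : V} (hx : ∀ y, y ≠ x → G.Adj x y) (e : Sym2 V) :
    ∃ u, ∀ w, w ≠ x → w ≠ u → (G.deleteEdges {e}).Adj x w := by
  induction e with | h p q => ?_
  rcases eq_or_ne p x with rfl | hp
  · exact ⟨q, fun w hw hwq => deleteEdges_adj.2 ⟨hx w hw, by simp [hwq, hw]⟩⟩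
  · exact ⟨p, fun w hw hwp => deleteEdges_adj.2 ⟨hx w hw, by simp [hwp, hp.symm]⟩⟩

lemma edgeConn_eq_minDeg [Fintype V] [Nontrivial V] {x : V} (hx : ∀ y, y ≠ x → G.Adj x y) :
    edgeConn G = minDeg G := by
  refine le_antisymm ?_ (minDeg_le_edgeConn (u := x) fun w hw _ => hx w hw)
  obtain ⟨v, hv⟩ := exists_gDeg_eq_minDeg (G := G)
  obtain ⟨w, hw⟩ := exists_ne v
  exact hv ▸ edgeConn_le_gDeg hw.symm

theorem minEdgeConnected_iff_forall_gDeg_eq_minDeg [Fintype V] {x : V}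
    (hx : ∀ y, y ≠ x → G.Adj x y) (hlt : minDeg G < gDeg G x) :
    MinEdgeConnected G ↔ ∀ v, v ≠ x → gDeg G v = minDeg G := by
  obtain ⟨y, hxy⟩ : (G.neighborSet x).Nonempty := Set.nonempty_of_ncard_ne_zero (by
    unfold gDeg at hlt; omega)
  have : Nontrivial V := ⟨⟨x, y, hxy.ne⟩⟩
  have hpos : 0 < minDeg G := le_minDeg fun v => by
    rcases eq_or_ne v x with rfl | hv
    exacts [gDeg_pos_of_adj hxy, gDeg_pos_of_adj (hx v hv).symm]
  have hconn := edgeConn_eq_minDeg hx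
  have hlower (e : Sym2 V) : minDeg (G.deleteEdges {e}) ≤ edgeConn (G.deleteEdges {e}) := by
    obtain ⟨u, hu⟩ := exists_forall_adj_deleteEdges hx e
    exact minDeg_le_edgeConn hu
  constructor
  · intro h v hv
    by_contra hne
    have hgt := (minDeg_le v).lt_of_ne (Ne.symm hne)
    have := (minDeg_le_minDeg_deleteEdges hlt hgt).trans (hlower s(x, v))
    rw [h _ (hx v hv), hconn] at this
    omega
  · intro h e he
    induction e with | h p q => ?_
    obtain ⟨r, t, hr, hrt, hpq⟩ : ∃ r t, r ≠ x ∧ G.Adj r t ∧ s(p, q) = s(r, t) := by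
      rcases eq_or_ne p x with rfl | hp
      exacts [⟨q, p, he.ne', he.symm, Sym2.eq_swap⟩, ⟨p, q, hp, he, rfl⟩]
    rw [hpq, hconn]
    refine le_antisymm ?_ ((minDeg_sub_one_le_minDeg_deleteEdges _).trans (hlower _))
    exact h r hr ▸ edgeConn_deleteEdges_le hrt

end

/-- A non-complete finite simple graph `Γ` with a dominating vertex `x`
is minimally edge connected iff `x` is the only dominating vertex of `Γ` and
`Γ - {x}` is regular. -/
theorem stmt_0 {V : Type*} [Fintype V] (G : SimpleGraph V) (x : V)
    (hnc : G ≠ ⊤) (hdom : ∀ y : V, y ≠ x → G.Adj x y) :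
    MinEdgeConnected G ↔
      ((∀ z : V, (∀ y : V, y ≠ z → G.Adj z y) → z = x) ∧
        ∃ d : ℕ, ∀ v : ({x}ᶜ : Set V), gDeg (G.induce ({x}ᶜ : Set V)) v = d) := by
  have : Nonempty V := ⟨x⟩
  obtain ⟨a, b, hab, hnadj⟩ := ne_top_iff_exists_not_adj.1 hnc
  have hcard : 1 < Fintype.card V := Fintype.one_lt_card_iff.2 ⟨a, b, hab⟩
  have hlt : minDeg G < gDeg G x := by
    have := (minDeg_le a).trans (gDeg_le_card_sub_two hab hnadj)
    rw [gDeg_eq_card_sub_one hdom]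
    omega
  rw [minEdgeConnected_iff_forall_gDeg_eq_minDeg hdom hlt]
  constructor
  · intro h
    refine ⟨fun z hz => by_contra fun hzx => ?_, minDeg G - 1, fun v => ?_⟩
    · exact hlt.ne' ((gDeg_eq_card_sub_one hdom).trans
        ((gDeg_eq_card_sub_one hz).symm.trans (h z hzx)))
    · rw [gDeg_induce_compl_singleton v (hdom v v.2).symm, h v v.2]
  · rintro ⟨-, d, hd⟩
    have hdeg : ∀ v, v ≠ x → gDeg G v = d + 1 := fun v hv => by
      have h₁ : gDeg G v - 1 = d :=
        (gDeg_induce_compl_singleton ⟨v, hv⟩ (hdom v hv).symm).symm.trans (hd ⟨v, hv⟩)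
      have h₂ := gDeg_pos_of_adj (hdom v hv).symm
      omega
    obtain ⟨v₀, hv₀⟩ := exists_gDeg_eq_minDeg (G := G)
    have hv₀x : v₀ ≠ x := by rintro rfl; omega
    intro v hv
    rw [hdeg v hv, ← hv₀, hdeg v₀ hv₀x]
end

section
/- A finite group G is a non-cyclic group of prime exponent if and only if the power graph P(G) is non-complete and minimally edge connected. -/
/-!
If every non-identity element has prime order `p`, the neighbours of `x ≠ 1` are exactly
`⟨x⟩ \ {x}`, so `x` has degree `p - 1`, and the paths `x – 1` and `x – c – 1`
(`c ∈ ⟨x⟩ \ {1, x}`) are edge-disjoint. Hence the power graph has edge connectivity `p - 1`,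
and since every edge has an endpoint of degree `p - 1`, deleting it lowers the connectivity by one.

Conversely, the identity is adjacent to every vertex, and minimality places each edge `1 – x` in
a minimum edge cut; this forces every `x ≠ 1` to have the minimum degree `d`. Then every maximal
cyclic subgroup has order `d + 1`, and an element `y` of prime order has exactly `d` roots
(elements of which `y` is a power). Counting these roots inside the maximal cyclic subgroups
through `y` shows that `d + 1` is a prime power `p ^ k` and that distinct maximal cyclic
subgroups meet trivially; a central element of order `p` then rules out `k ≥ 2`. Finally `G`
is not cyclic, because the power graph of a cyclic `p`-group is complete.
-/

namespace SimpleGraph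

variable {V : Type*} (H : SimpleGraph V)

lemma ncard_incidenceSet_eq_gDeg (x : V) : (H.incidenceSet x).ncard = gDeg H x := by
  classical
  rw [gDeg, ← Nat.card_coe_set_eq, ← Nat.card_coe_set_eq]
  exact Nat.card_congr (H.incidenceSetEquivNeighborSet x)

lemma edgeConn_le_ncard {S : Set (Sym2 V)} (hS : S ⊆ H.edgeSet)
    (h : ¬ (H.deleteEdges S).Connected) : edgeConn H ≤ S.ncard :=
  Nat.sInf_le ⟨S, hS, rfl, h⟩

lemma edgeConn_le_gDeg {x y : V} (hxy : x ≠ y) : edgeConn H ≤ gDeg H x := by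
  rw [← ncard_incidenceSet_eq_gDeg]
  refine H.edgeConn_le_ncard (H.incidenceSet_subset x) fun hc => ?_
  refine not_reachable_of_neighborSet_left_eq_empty hxy ?_ (hc.preconnected x y)
  ext z
  simp [mem_incidenceSet]

lemma minDeg_le_gDeg (v : V) : minDeg H ≤ gDeg H v :=
  Nat.sInf_le ⟨v, rfl⟩

lemma edgeConn_le_minDeg [Nontrivial V] : edgeConn H ≤ minDeg H := by
  obtain ⟨v, hv⟩ : minDeg H ∈ Set.range (gDeg H) := Nat.sInf_mem (Set.range_nonempty _)
  obtain ⟨y, hy⟩ := exists_ne v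
  exact hv ▸ H.edgeConn_le_gDeg hy.symm

lemma exists_ncard_eq_edgeConn [Nontrivial V] :
    ∃ S ⊆ H.edgeSet, S.ncard = edgeConn H ∧ ¬ (H.deleteEdges S).Connected := by
  have hne : {n | ∃ S ⊆ H.edgeSet, S.ncard = n ∧ ¬ (H.deleteEdges S).Connected}.Nonempty :=
    ⟨_, H.edgeSet, subset_rfl, rfl, by simpa using not_connected_bot⟩
  exact Nat.sInf_mem hne

lemma le_edgeConn [Finite V] [Nontrivial V] {k : ℕ} (h : H.IsEdgeConnected k) :
    k ≤ edgeConn H := by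
  obtain ⟨S, -, hS, hdis⟩ := H.exists_ncard_eq_edgeConn
  by_contra! hlt
  refine hdis (Connected.mk fun u v => h u v ?_)
  rw [← S.toFinite.cast_ncard_eq, hS]
  exact_mod_cast hlt

lemma gDeg_deleteEdges_singleton [Finite V] {x w : V} (h : H.Adj x w) :
    gDeg (H.deleteEdges {s(x, w)}) x = gDeg H x - 1 := by
  have : (H.deleteEdges {s(x, w)}).neighborSet x = H.neighborSet x \ {w} := by
    ext z
    simp only [mem_neighborSet, deleteEdges_adj, Set.mem_singleton_iff, Set.mem_sdiff,
      Sym2.congr_right]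
  rw [gDeg, gDeg, this, Set.ncard_sdiff_singleton_of_mem (show w ∈ H.neighborSet x from h)]

variable {H}

lemma isEdgeReachable_of_forall_adj [Finite V] {u v : V} {C : Set V} (hu : u ∉ C)
    (hC : ∀ c ∈ C, H.Adj u c ∧ (c = v ∨ H.Adj c v)) :
    H.IsEdgeReachable C.ncard u v := by
  classical
  intro S hS
  rw [← S.toFinite.cast_ncard_eq, Nat.cast_lt] at hS
  by_contra hnr
  have hcut : ∀ c ∈ C, s(u, c) ∈ S ∨ (c ≠ v ∧ s(c, v) ∈ S) := by
    intro c hc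
    by_contra! h
    obtain ⟨huc, hcv⟩ := hC c hc
    have h1 : (H.deleteEdges S).Adj u c := (deleteEdges_adj).2 ⟨huc, h.1⟩
    rcases hcv with rfl | hcv
    · exact hnr h1.reachable
    · have hv : c ≠ v := hcv.ne
      exact hnr (h1.reachable.trans ((deleteEdges_adj).2 ⟨hcv, h.2 hv⟩).reachable)
  let f : V → Sym2 V := fun c => if s(u, c) ∈ S then s(u, c) else s(c, v)
  have hmaps : ∀ c ∈ C, f c ∈ S := by
    intro c hc
    by_cases h : s(u, c) ∈ S
    · simp only [f, if_pos h, h]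
    · simpa only [f, if_neg h] using ((hcut c hc).resolve_left h).2
  have hinj : Set.InjOn f C := by
    intro c₁ hc₁ c₂ hc₂ h
    by_cases h₁ : s(u, c₁) ∈ S <;> by_cases h₂ : s(u, c₂) ∈ S <;>
      simp only [f, h₁, h₂, if_true, if_false, Sym2.eq_iff] at h <;> aesop
  exact absurd (Set.ncard_le_ncard_of_injOn f hmaps hinj) (by omega)

lemma IsEdgeConnected.deleteEdges_singleton {k : ℕ} (h : H.IsEdgeConnected k) (e : Sym2 V) :
    (H.deleteEdges {e}).IsEdgeConnected (k - 1) := by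
  intro u v S hS
  have hfin : S.Finite := Set.finite_of_encard_le_coe hS.le
  rw [← hfin.cast_ncard_eq, Nat.cast_lt] at hS
  rw [deleteEdges_deleteEdges]
  refine h u v ((Set.encard_union_le _ _).trans_lt ?_)
  rw [Set.encard_singleton, ← hfin.cast_ncard_eq]
  exact_mod_cast (by omega : 1 + S.ncard < k)

lemma IsEdgeConnected.minEdgeConnected [Finite V] {k : ℕ} (h : H.IsEdgeConnected k)
    (hdeg : ∀ e ∈ H.edgeSet, ∃ x ∈ e, gDeg H x ≤ k) : MinEdgeConnected H := by
  intro e he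
  obtain ⟨x, hxe, hx⟩ := hdeg e he
  obtain ⟨w, rfl⟩ := Sym2.mem_iff_exists.1 hxe
  have hadj : H.Adj x w := he
  have : Nontrivial V := ⟨⟨x, w, hadj.ne⟩⟩
  have h₁ := (H.edgeConn_le_gDeg hadj.ne).trans hx
  have h₂ := H.le_edgeConn h
  have h₃ := (H.deleteEdges {s(x, w)}).edgeConn_le_gDeg hadj.ne
  have h₄ := (H.deleteEdges {s(x, w)}).le_edgeConn (h.deleteEdges_singleton s(x, w))
  rw [H.gDeg_deleteEdges_singleton hadj] at h₃
  omega

lemma Reachable.of_forall_adj {H' : SimpleGraph V}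
    (h : ∀ x y, H.Adj x y → H'.Reachable x y) {u v : V} (huv : H.Reachable u v) :
    H'.Reachable u v := by
  rw [reachable_iff_reflTransGen] at huv ⊢
  exact Relation.reflTransGen_closed
    (fun x y hxy => (reachable_iff_reflTransGen x y).1 (h x y hxy)) _ _ huv

lemma not_reachable_deleteEdges_sdiff_singleton {T : Set (Sym2 V)} {v₀ u w a : V}
    (hu : (H.deleteEdges T).Reachable v₀ u) (hw : (H.deleteEdges T).Reachable v₀ w)
    (ha : ¬ (H.deleteEdges T).Reachable v₀ a) :
    ¬ (H.deleteEdges (T \ {s(u, w)})).Reachable v₀ a := by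
  refine fun h => ha (Reachable.of_forall_adj (fun x y hxy => ?_) h)
  rw [deleteEdges_adj, Set.mem_sdiff, Set.mem_singleton_iff, not_and_not_right] at hxy
  by_cases hT : s(x, y) ∈ T
  · rcases Sym2.eq_iff.1 (hxy.2 hT) with ⟨rfl, rfl⟩ | ⟨rfl, rfl⟩
    · exact hu.symm.trans hw
    · exact hw.symm.trans hu
  · exact ((deleteEdges_adj).2 ⟨hxy.1, hT⟩).reachable

lemma gDeg_le_ncard_of_not_reachable [Finite V] {v₀ a : V} (hv₀ : H.IsUniversal v₀)
    {T : Set (Sym2 V)} (ha : ¬ (H.deleteEdges T).Reachable v₀ a) : gDeg H a ≤ T.ncard := by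
  classical
  -- a neighbour `c` of `a` gives the cut edge `a – c` or `v₀ – c`, as `c` is reachable or not
  let R := (H.deleteEdges T).Reachable v₀
  let f : V → Sym2 V := fun c => if R c then s(a, c) else s(v₀, c)
  have hmaps : ∀ c ∈ H.neighborSet a, f c ∈ T := by
    intro c hc
    by_cases hcR : R c
    · simp only [f, if_pos hcR]
      by_contra hT
      exact ha (hcR.trans ((deleteEdges_adj).2 ⟨hc.symm, by rwa [Sym2.eq_swap]⟩).reachable)
    · simp only [f, if_neg hcR]
      by_contra hT
      have hc₀ : v₀ ≠ c := fun h => hcR (h ▸ Reachable.rfl)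
      exact hcR ((deleteEdges_adj).2 ⟨hv₀ hc₀, hT⟩).reachable
  have hinj : Set.InjOn f (H.neighborSet a) := by
    intro c₁ hc₁ c₂ hc₂ h
    have ha₀ : v₀ ≠ a := fun h => ha (h ▸ Reachable.rfl)
    have hc₁a : c₁ ≠ a := (H.ne_of_adj hc₁).symm
    have hc₂a : c₂ ≠ a := (H.ne_of_adj hc₂).symm
    by_cases h₁ : R c₁ <;> by_cases h₂ : R c₂ <;>
      simp only [f, h₁, h₂, if_true, if_false, Sym2.eq_iff] at h <;> aesop
  exact Set.ncard_le_ncard_of_injOn f hmaps hinj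

lemma IsUniversal.connected {v₀ : V} (hv₀ : H.IsUniversal v₀) : H.Connected :=
  have : Nonempty V := ⟨v₀⟩
  Connected.mk fun u w =>
    (Reachable.of_isUniversal u hv₀).symm.trans (Reachable.of_isUniversal w hv₀)

/-- Minimality puts the edge `s(v₀, x)` into a minimum edge cut `T`; `x` must lie on the far
side of `T`, and every vertex there has degree at most `|T| = edgeConn H ≤ minDeg H`. -/
lemma _root_.MinEdgeConnected.gDeg_eq_minDeg [Finite V] (hmin : MinEdgeConnected H) {v₀ x : V}
    (hv₀ : H.IsUniversal v₀) (hx : v₀ ≠ x) : gDeg H x = minDeg H := by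
  have : Nontrivial V := ⟨⟨v₀, x, hx⟩⟩
  have hpos : 1 ≤ edgeConn H :=
    H.le_edgeConn (isEdgeConnected_one.2 (hv₀.connected).preconnected)
  obtain ⟨S, hSE, hScard, hSdis⟩ := (H.deleteEdges {s(v₀, x)}).exists_ncard_eq_edgeConn
  rw [hmin _ (hv₀ hx)] at hScard
  rw [edgeSet_deleteEdges] at hSE
  have hS : s(v₀, x) ∉ S := fun h => (hSE h).2 rfl
  set T := insert (s(v₀, x)) S
  have hT : T \ {s(v₀, x)} = S := by simp [T, hS]
  have hTcard : T.ncard = edgeConn H := by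
    rw [Set.ncard_insert_of_notMem hS, hScard]
    omega
  obtain ⟨a, ha⟩ : ∃ a, ¬ (H.deleteEdges T).Reachable v₀ a := by
    by_contra! h
    refine hSdis (Connected.mk fun u w => ?_)
    rw [deleteEdges_deleteEdges, ← Set.insert_eq]
    exact (h u).symm.trans (h w)
  by_cases hxr : (H.deleteEdges T).Reachable v₀ x
  · have hdis := not_reachable_deleteEdges_sdiff_singleton Reachable.rfl hxr ha
    rw [hT] at hdis
    have := H.edgeConn_le_ncard (fun e he => (hSE he).1) (fun hc => hdis (hc.preconnected _ _))
    omega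
  · have h₁ := gDeg_le_ncard_of_not_reachable hv₀ hxr
    have h₂ := H.edgeConn_le_minDeg
    have h₃ := H.minDeg_le_gDeg x
    omega

end SimpleGraph

namespace Nat

lemma dvd_six_of_forall_ordProj_lt_four {M : ℕ} (hM : M ≠ 0) (h : ∀ p, ordProj[p] M < 4) :
    M ∣ 6 := by
  rw [← factorization_le_iff_dvd hM (by norm_num), Finsupp.le_def]
  intro p
  by_cases hp : p.Prime ∧ p ∣ M
  · obtain ⟨hp, hpM⟩ := hp
    have hv : 1 ≤ M.factorization p := hp.factorization_pos_of_dvd hM hpM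
    have hv1 : M.factorization p = 1 := by
      by_contra hne
      have : p ^ 2 ≤ ordProj[p] M := pow_le_pow_right₀ hp.one_le (by omega)
      nlinarith [h p, hp.two_le]
    have hp3 : p < 4 := by simpa [hv1] using h p
    have h6 : p ∣ 6 := by
      obtain rfl | rfl : p = 2 ∨ p = 3 := by have := hp.two_le; omega
      all_goals norm_num
    rw [hv1]
    exact hp.factorization_pos_of_dvd (by norm_num) h6
  · have : M.factorization p = 0 := (factorization_eq_zero_iff M p).2 (by tauto)
    omega

/-- Either some prime-power part `q ^ a` of `M` is at least `4`, or `M ∣ 6`, i.e.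
`M = 6 = 3 ^ 1 * 2`. -/
lemma exists_prime_pow_mul_of_not_isPrimePow {M : ℕ} (hM : 2 ≤ M) (h : ¬ IsPrimePow M) :
    ∃ q a m, q.Prime ∧ q ^ a * m = M ∧ ¬ q ∣ m ∧ 2 ≤ m ∧ 4 * m < M + 4 := by
  by_cases h4 : ∃ q, 4 ≤ ordProj[q] M
  · obtain ⟨q, hq4⟩ := h4
    have hv : M.factorization q ≠ 0 := fun h0 => by simp [h0] at hq4
    have hq : q.Prime := by
      by_contra hq
      exact hv ((factorization_eq_zero_iff M q).2 (Or.inl hq))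
    have hqm := ordProj_mul_ordCompl_eq_self M q
    refine ⟨q, _, _, hq, hqm, not_dvd_ordCompl hq (by omega), ?_, ?_⟩
    · by_contra! hm
      have h1 : ordCompl[q] M = 1 := by have := ordCompl_pos q (show M ≠ 0 by omega); omega
      apply h
      rw [← hqm, h1, mul_one]
      exact hq.isPrimePow.pow hv
    · nlinarith
  · push Not at h4
    have h6 := dvd_six_of_forall_ordProj_lt_four (by omega) h4
    have hM6 : M = 6 := by
      have := le_of_dvd (by norm_num) h6
      interval_cases M
      · exact absurd prime_two.isPrimePow h
      · exact absurd prime_three.isPrimePow h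
      all_goals first | rfl | norm_num at h6
    exact ⟨3, 1, 2, prime_three, by omega, by norm_num, le_rfl, by omega⟩

end Nat

open Subgroup

def rootSet {G : Type*} [Group G] (x : G) : Set G := {z | x ∈ zpowers z}

lemma one_notMem_rootSet {G : Type*} [Group G] {y : G} (hy : y ≠ 1) : 1 ∉ rootSet y := by
  simpa [rootSet] using hy

section Cyclic

variable {G : Type*} [Group G]

lemma ncard_zpowers (x : G) : (zpowers x : Set G).ncard = orderOf x := by
  rw [← Nat.card_coe_set_eq, SetLike.coe_sort_coe, Nat.card_zpowers]

lemma pow_gcd_orderOf_mem_zpowers_pow (w : G) (j : ℕ) :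
    w ^ (orderOf w).gcd j ∈ zpowers (w ^ j) := by
  have h : w ^ (orderOf w).gcd j = (w ^ j) ^ (orderOf w).gcdB j := by
    rw [← zpow_natCast, Nat.gcd_eq_gcd_ab, zpow_add, zpow_mul, zpow_natCast, pow_orderOf_eq_one,
      one_zpow, one_mul, zpow_mul, zpow_natCast]
  rw [h]
  exact zpow_mem (mem_zpowers _) _

variable [Finite G]

lemma zpowers_eq_of_le_of_orderOf_le {x z : G} (h : zpowers x ≤ zpowers z)
    (hord : orderOf z ≤ orderOf x) : zpowers x = zpowers z :=
  eq_of_le_of_card_ge h (by simpa only [Nat.card_zpowers] using hord)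

lemma exists_mem_zpowers_forall_orderOf_le (x : G) :
    ∃ w, x ∈ zpowers w ∧ ∀ v, w ∈ zpowers v → orderOf v ≤ orderOf w := by
  have : Nonempty {z : G // x ∈ zpowers z} := ⟨⟨x, mem_zpowers x⟩⟩
  obtain ⟨⟨w, hxw⟩, hmax⟩ :=
    Finite.exists_max fun z : {z : G // x ∈ zpowers z} => orderOf z.1
  exact ⟨w, hxw, fun v hwv => hmax ⟨v, zpowers_le.2 hwv hxw⟩⟩

lemma mem_zpowers_of_orderOf_dvd {w u v : G} (hu : u ∈ zpowers w) (hv : v ∈ zpowers w)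
    (h : orderOf u ∣ orderOf v) : u ∈ zpowers v := by
  obtain ⟨i, rfl⟩ : ∃ i : ℕ, w ^ i = u := mem_powers_iff_mem_zpowers.2 hu
  obtain ⟨j, rfl⟩ : ∃ j : ℕ, w ^ j = v := mem_powers_iff_mem_zpowers.2 hv
  set g := (orderOf w).gcd j
  have hg : g * (orderOf w / g) = orderOf w := Nat.mul_div_cancel' (Nat.gcd_dvd_left _ _)
  have hpos : 0 < orderOf w / g := Nat.div_pos (Nat.gcd_le_left _ (orderOf_pos w))
    (Nat.gcd_pos_of_pos_left _ (orderOf_pos w))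
  have hj : orderOf (w ^ j) = orderOf w / g := orderOf_pow w
  have hgi : g ∣ i := by
    refine Nat.dvd_of_mul_dvd_mul_right hpos ?_
    rw [hg, orderOf_dvd_iff_pow_eq_one, pow_mul]
    exact orderOf_dvd_iff_pow_eq_one.1 (hj ▸ h)
  obtain ⟨c, rfl⟩ := hgi
  rw [pow_mul]
  exact zpowers_le.2 (pow_gcd_orderOf_mem_zpowers_pow w j) (pow_mem (mem_zpowers _) c)

/-- The roots of `y` in `⟨w⟩` are the elements of order divisible by `q`, i.e. those outside
the subgroup of order `m`. -/
lemma ncard_rootSet_inter_zpowers {q a m : ℕ} {w y : G} (hq : q.Prime) (hy : orderOf y = q)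
    (hyw : y ∈ zpowers w) (hw : orderOf w = q ^ a * m) (hqm : ¬ q ∣ m) :
    (rootSet y ∩ zpowers w).ncard = q ^ a * m - m := by
  have hdvd : q ^ a ∣ orderOf w := hw ▸ dvd_mul_right _ _
  have hK : orderOf (w ^ q ^ a) = m := by
    rw [orderOf_pow_of_dvd (pow_ne_zero _ hq.ne_zero) hdvd, hw,
      Nat.mul_div_cancel_left _ (pow_pos hq.pos _)]
  have hKw : (zpowers (w ^ q ^ a) : Set G) ⊆ zpowers w := zpowers_le.2 (pow_mem (mem_zpowers w) _)
  have key : rootSet y ∩ zpowers w = (zpowers w : Set G) \ zpowers (w ^ q ^ a) := by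
    ext z
    simp only [rootSet, Set.mem_inter_iff, Set.mem_ofPred_eq, Set.mem_sdiff, SetLike.mem_coe]
    refine and_comm.trans (and_congr_right fun hz => ?_)
    have hzdvd : orderOf z ∣ q ^ a * m := hw ▸ orderOf_dvd_of_mem_zpowers hz
    have hroot : y ∈ zpowers z ↔ q ∣ orderOf z :=
      ⟨fun h => hy ▸ orderOf_dvd_of_mem_zpowers h,
        fun h => mem_zpowers_of_orderOf_dvd hyw hz (hy ▸ h)⟩
    have hsmall : z ∈ zpowers (w ^ q ^ a) ↔ orderOf z ∣ m :=
      ⟨fun h => hK ▸ orderOf_dvd_of_mem_zpowers h,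
        fun h => mem_zpowers_of_orderOf_dvd hz (pow_mem (mem_zpowers w) _) (hK ▸ h)⟩
    rw [hroot, hsmall]
    refine ⟨fun h h' => hqm (h.trans h'), fun h => ?_⟩
    by_contra h'
    have hcop : (orderOf z).Coprime (q ^ a) := (hq.coprime_iff_not_dvd.2 h').symm.pow_right a
    exact h (hcop.dvd_of_dvd_mul_left hzdvd)
  rw [key, Set.ncard_sdiff hKw, ncard_zpowers, ncard_zpowers, hK, hw]

lemma two_mul_card_inf_le {w₁ w₂ : G} (hne : zpowers w₁ ≠ zpowers w₂)
    (hord : orderOf w₂ ≤ orderOf w₁) :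
    2 * Nat.card ↥(zpowers w₁ ⊓ zpowers w₂) ≤ orderOf w₁ := by
  obtain ⟨c, hc⟩ := Nat.card_zpowers w₁ ▸ card_dvd_of_le (inf_le_left (b := zpowers w₂))
  have hc1 : c ≠ 1 := by
    rintro rfl
    rw [mul_one, ← Nat.card_zpowers] at hc
    have hle : zpowers w₁ ≤ zpowers w₂ :=
      (eq_of_le_of_card_ge inf_le_left hc.le) ▸ inf_le_right
    exact hne (zpowers_eq_of_le_of_orderOf_le hle hord)
  have hc0 : c ≠ 0 := by
    rintro rfl
    exact (orderOf_pos w₁).ne' (by simpa using hc)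
  rw [hc, mul_comm]
  exact Nat.mul_le_mul_left _ (by omega)

end Cyclic

section PowerGraph

variable {G : Type*} [Group G] [Finite G]

lemma powerGraph_adj_iff {x y : G} :
    (powerGraph G).Adj x y ↔ x ≠ y ∧ (y ∈ zpowers x ∨ x ∈ zpowers y) := by
  simp only [powerGraph, SimpleGraph.fromRel_adj, ← mem_powers_iff_mem_zpowers,
    Submonoid.mem_powers_iff, eq_comm]

lemma powerGraph_isUniversal_one : (powerGraph G).IsUniversal 1 :=
  fun _ hx => powerGraph_adj_iff.2 ⟨hx, Or.inr (one_mem _)⟩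

lemma gDeg_powerGraph (x : G) :
    gDeg (powerGraph G) x = ((zpowers x : Set G) ∪ rootSet x).ncard - 1 := by
  have : (powerGraph G).neighborSet x = ((zpowers x : Set G) ∪ rootSet x) \ {x} := by
    ext z
    simp only [SimpleGraph.mem_neighborSet, powerGraph_adj_iff, Set.mem_sdiff, Set.mem_union,
      SetLike.mem_coe, rootSet, Set.mem_ofPred_eq, Set.mem_singleton_iff]
    tauto
  rw [gDeg, this, Set.ncard_sdiff_singleton_of_mem (Set.mem_union_left _ (mem_zpowers x))]

lemma gDeg_powerGraph_of_forall_orderOf_le {w : G}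
    (hw : ∀ v, w ∈ zpowers v → orderOf v ≤ orderOf w) :
    gDeg (powerGraph G) w = orderOf w - 1 := by
  have : rootSet w ⊆ zpowers w := fun z hz =>
    (zpowers_eq_of_le_of_orderOf_le (zpowers_le.2 hz) (hw z hz)) ▸ mem_zpowers z
  rw [gDeg_powerGraph, Set.union_eq_self_of_subset_right this, ncard_zpowers]

lemma gDeg_powerGraph_of_prime {y : G} (hy : (orderOf y).Prime) :
    gDeg (powerGraph G) y = (rootSet y).ncard := by
  have hy1 : y ≠ 1 := fun h => by simp [h, Nat.not_prime_one] at hy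
  have : (zpowers y : Set G) ∪ rootSet y = insert 1 (rootSet y) := by
    ext z
    simp only [Set.mem_union, Set.mem_insert_iff, SetLike.mem_coe]
    refine ⟨fun h => ?_, fun h => h.imp (fun hz : z = 1 => hz ▸ one_mem _) id⟩
    rcases h with hz | hz
    · refine or_iff_not_imp_left.2 fun hz1 => ?_
      have hord : orderOf z = orderOf y := (hy.eq_one_or_self_of_dvd _
        (orderOf_dvd_of_mem_zpowers hz)).resolve_left (mt orderOf_eq_one_iff.1 hz1)
      show y ∈ zpowers z
      exact zpowers_eq_of_le_of_orderOf_le (zpowers_le.2 hz) hord.ge ▸ mem_zpowers y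
    · exact Or.inr hz
  rw [gDeg_powerGraph, this, Set.ncard_insert_of_notMem (one_notMem_rootSet hy1),
    Nat.add_sub_cancel]

lemma two_mul_sub_lt_ncard_rootSet_add_card_inf {q a m : ℕ} {y w₁ w₂ : G} (hq : q.Prime)
    (hy : orderOf y = q) (hqm : ¬ q ∣ m) (hw₁ : orderOf w₁ = q ^ a * m)
    (hw₂ : orderOf w₂ = q ^ a * m) (hy₁ : y ∈ zpowers w₁) (hy₂ : y ∈ zpowers w₂) :
    2 * (q ^ a * m - m) < (rootSet y).ncard + Nat.card ↥(zpowers w₁ ⊓ zpowers w₂) := by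
  have hy1 : y ≠ 1 := fun h => hq.ne_one (by rw [← hy, h, orderOf_one])
  set S₁ := rootSet y ∩ zpowers w₁
  set S₂ := rootSet y ∩ zpowers w₂
  have h₁ : S₁.ncard = q ^ a * m - m := ncard_rootSet_inter_zpowers hq hy hy₁ hw₁ hqm
  have h₂ : S₂.ncard = q ^ a * m - m := ncard_rootSet_inter_zpowers hq hy hy₂ hw₂ hqm
  have hU : (S₁ ∪ S₂).ncard ≤ (rootSet y).ncard :=
    Set.ncard_le_ncard (Set.union_subset Set.inter_subset_left Set.inter_subset_left)
  have hI : (S₁ ∩ S₂).ncard < Nat.card ↥(zpowers w₁ ⊓ zpowers w₂) := by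
    rw [← SetLike.coe_sort_coe, Nat.card_coe_set_eq]
    refine Set.ncard_lt_ncard (Set.ssubset_iff_of_subset ?_ |>.2 ⟨1, one_mem _, ?_⟩)
    · rintro z ⟨⟨-, hz₁⟩, -, hz₂⟩
      exact ⟨hz₁, hz₂⟩
    · exact fun h => one_notMem_rootSet hy1 h.1.1
  have := Set.ncard_union_add_ncard_inter S₁ S₂
  omega

lemma orderOf_pow_orderOf_div_prime {x : G} {p k : ℕ} (hp : p.Prime) (hx : x ≠ 1)
    (h : orderOf x ∣ p ^ k) : orderOf (x ^ (orderOf x / p)) = p := by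
  obtain ⟨s, -, hs⟩ := (Nat.dvd_prime_pow hp).1 h
  refine orderOf_pow_orderOf_div (orderOf_pos x).ne' ?_
  rcases s with _ | s
  · exact absurd (orderOf_eq_one_iff.1 (by simpa using hs)) hx
  · exact hs ▸ dvd_pow_self p s.succ_ne_zero

lemma powerGraph_eq_top_of_isCyclic [IsCyclic G] {p k : ℕ} (hp : p.Prime)
    (h : ∀ x : G, orderOf x ∣ p ^ k) : powerGraph G = ⊤ := by
  obtain ⟨w, hw⟩ := IsCyclic.exists_generator (α := G)
  ext u v
  rw [powerGraph_adj_iff, SimpleGraph.top_adj]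
  refine ⟨And.left, fun huv => ⟨huv, ?_⟩⟩
  obtain ⟨s, -, hs⟩ := (Nat.dvd_prime_pow hp).1 (h u)
  obtain ⟨t, -, ht⟩ := (Nat.dvd_prime_pow hp).1 (h v)
  rcases le_total s t with hst | hts
  · exact Or.inr (mem_zpowers_of_orderOf_dvd (hw u) (hw v) (hs ▸ ht ▸ pow_dvd_pow p hst))
  · exact Or.inl (mem_zpowers_of_orderOf_dvd (hw v) (hw u) (ht ▸ hs ▸ pow_dvd_pow p hts))

end PowerGraph

section RegularPowerGraph

variable {G : Type*} [Group G] [Finite G] {d : ℕ}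

lemma exists_orderOf_eq_succ_of_gDeg_eq (hreg : ∀ x : G, x ≠ 1 → gDeg (powerGraph G) x = d)
    {x : G} (hx : x ≠ 1) : ∃ w, x ∈ zpowers w ∧ orderOf w = d + 1 := by
  obtain ⟨w, hxw, hmax⟩ := exists_mem_zpowers_forall_orderOf_le x
  have hw : w ≠ 1 := by
    rintro rfl
    exact hx (by simpa using hxw)
  have := hreg w hw
  rw [gDeg_powerGraph_of_forall_orderOf_le hmax] at this
  exact ⟨w, hxw, by have := orderOf_pos w; omega⟩

lemma orderOf_dvd_succ_of_gDeg_eq (hreg : ∀ x : G, x ≠ 1 → gDeg (powerGraph G) x = d)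
    (x : G) : orderOf x ∣ d + 1 := by
  by_cases hx : x = 1
  · simp [hx]
  · obtain ⟨w, hxw, hw⟩ := exists_orderOf_eq_succ_of_gDeg_eq hreg hx
    exact hw ▸ orderOf_dvd_of_mem_zpowers hxw

lemma exponent_eq_succ_of_gDeg_eq [Nontrivial G]
    (hreg : ∀ x : G, x ≠ 1 → gDeg (powerGraph G) x = d) : Monoid.exponent G = d + 1 := by
  obtain ⟨x, hx⟩ := exists_ne (1 : G)
  obtain ⟨w, -, hw⟩ := exists_orderOf_eq_succ_of_gDeg_eq hreg hx
  refine Nat.dvd_antisymm ?_ (hw ▸ Monoid.order_dvd_exponent w)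
  exact Monoid.exponent_dvd_of_forall_pow_eq_one fun x =>
    orderOf_dvd_iff_pow_eq_one.1 (orderOf_dvd_succ_of_gDeg_eq hreg x)

lemma ncard_rootSet_of_gDeg_eq (hreg : ∀ x : G, x ≠ 1 → gDeg (powerGraph G) x = d) {y : G}
    (hy : (orderOf y).Prime) : (rootSet y).ncard = d := by
  rw [← gDeg_powerGraph_of_prime hy, hreg y fun h => by simp [h, Nat.not_prime_one] at hy]

/-- If `d + 1 = q ^ a * m` with `m ≥ 2`, an element `y` of order `q` in a cyclic subgroup of
order `d + 1` has fewer than `d` roots there, so it lies in a second such subgroup; the two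
subgroups meet in at most half of their elements, which yields too many roots unless `q ^ a < 4`. -/
lemma isPrimePow_succ_of_gDeg_eq [Nontrivial G]
    (hreg : ∀ x : G, x ≠ 1 → gDeg (powerGraph G) x = d) : IsPrimePow (d + 1) := by
  obtain ⟨x, hx⟩ := exists_ne (1 : G)
  obtain ⟨g, hxg, hg⟩ := exists_orderOf_eq_succ_of_gDeg_eq hreg hx
  have hd : 2 ≤ d + 1 := by
    by_contra! h
    rw [orderOf_eq_one_iff.1 (by omega : orderOf g = 1)] at hxg
    exact hx (by simpa using hxg)
  by_contra hpp
  obtain ⟨q, a, m, hq, hqam, hqm, hm, hlt⟩ := Nat.exists_prime_pow_mul_of_not_isPrimePow hd hpp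
  have hqd : q ∣ orderOf g := by
    rcases a with _ | a
    · rw [pow_zero, one_mul] at hqam
      omega
    · exact hg ▸ hqam ▸ Dvd.dvd.mul_right (dvd_pow_self q a.succ_ne_zero) m
  set y := g ^ (orderOf g / q)
  have hy : orderOf y = q := orderOf_pow_orderOf_div (orderOf_pos g).ne' hqd
  have hyg : y ∈ zpowers g := pow_mem (mem_zpowers g) _
  have hy1 : y ≠ 1 := fun h => hq.ne_one (by rw [← hy, h, orderOf_one])
  have hroot := ncard_rootSet_of_gDeg_eq hreg (hy ▸ hq)
  obtain ⟨z, hzy, hzg⟩ : ∃ z ∈ rootSet y, z ∉ zpowers g := by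
    by_contra! h
    have := ncard_rootSet_inter_zpowers hq hy hyg (hg.trans hqam.symm) hqm
    rw [Set.inter_eq_self_of_subset_left h] at this
    omega
  obtain ⟨w, hzw, hw⟩ := exists_orderOf_eq_succ_of_gDeg_eq hreg
    fun h => one_notMem_rootSet hy1 (h ▸ hzy)
  have hyw : y ∈ zpowers w := zpowers_le.2 hzw hzy
  have hne : zpowers g ≠ zpowers w := fun h => hzg (h ▸ hzw)
  have hinf := two_mul_card_inf_le hne (hw.trans hg.symm).le
  have hroots := two_mul_sub_lt_ncard_rootSet_add_card_inf hq hy hqm (hg.trans hqam.symm)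
    (hw.trans hqam.symm) hyg hyw
  omega

lemma zpowers_eq_of_gDeg_eq (hreg : ∀ x : G, x ≠ 1 → gDeg (powerGraph G) x = d) {p k : ℕ}
    (hp : p.Prime) (hpk : p ^ k = d + 1) {w₁ w₂ x : G} (hw₁ : orderOf w₁ = d + 1)
    (hw₂ : orderOf w₂ = d + 1) (hx : x ≠ 1) (hx₁ : x ∈ zpowers w₁)
    (hx₂ : x ∈ zpowers w₂) : zpowers w₁ = zpowers w₂ := by
  set y := x ^ (orderOf x / p)
  have hy : orderOf y = p :=
    orderOf_pow_orderOf_div_prime hp hx (hpk ▸ orderOf_dvd_succ_of_gDeg_eq hreg x)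
  have hy₂ : y ∈ zpowers w₂ := pow_mem hx₂ _
  have hcount := ncard_rootSet_inter_zpowers hp hy (pow_mem hx₁ _)
    (hw₁.trans (hpk.symm.trans (mul_one _).symm)) hp.not_dvd_one
  have hsub : rootSet y ⊆ zpowers w₁ := by
    refine Set.inter_eq_left.1 (Set.eq_of_subset_of_ncard_le Set.inter_subset_left ?_)
    rw [hcount, ncard_rootSet_of_gDeg_eq hreg (hy ▸ hp)]
    omega
  exact (zpowers_eq_of_le_of_orderOf_le (zpowers_le.2 (hsub hy₂))
    (hw₁.trans hw₂.symm).le).symm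

lemma not_isCyclic_of_gDeg_eq [Nontrivial G]
    (hreg : ∀ x : G, x ≠ 1 → gDeg (powerGraph G) x = d) (hne : powerGraph G ≠ ⊤) :
    ¬ IsCyclic G := by
  intro
  obtain ⟨p, k, hp, -, hpk⟩ := (isPrimePow_nat_iff _).1 (isPrimePow_succ_of_gDeg_eq hreg)
  exact hne (powerGraph_eq_top_of_isCyclic hp fun x => hpk ▸ orderOf_dvd_succ_of_gDeg_eq hreg x)

/-- Maximal cyclic subgroups have order `p ^ k` and meet trivially. For `k ≥ 2`, take `z`
central of order `p` in `⟨w₁⟩` and `w₂` generating another maximal cyclic subgroup: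
`(w₂ z) ^ p = w₂ ^ p` is a nontrivial element of `⟨w₂⟩`, so `w₂ z`, and hence `z`, lies
in `⟨w₂⟩`. -/
lemma prime_succ_of_gDeg_eq [Nontrivial G] (hreg : ∀ x : G, x ≠ 1 → gDeg (powerGraph G) x = d)
    (hne : powerGraph G ≠ ⊤) : (d + 1).Prime := by
  obtain ⟨p, k, hp, hk, hpk⟩ := (isPrimePow_nat_iff _).1 (isPrimePow_succ_of_gDeg_eq hreg)
  have hnc := not_isCyclic_of_gDeg_eq hreg hne
  suffices k = 1 by rwa [← hpk, this, pow_one]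
  by_contra hk1
  have : Fact p.Prime := ⟨hp⟩
  have hdvd : ∀ x : G, orderOf x ∣ p ^ k := fun x => hpk ▸ orderOf_dvd_succ_of_gDeg_eq hreg x
  obtain ⟨z, hzc, hz⟩ : ∃ z ∈ center G, orderOf z = p := by
    have := IsPGroup.center_nontrivial (p := p) fun x =>
      ⟨k, orderOf_dvd_iff_pow_eq_one.1 (hdvd x)⟩
    obtain ⟨⟨z₀, hz₀⟩, hne₀⟩ := exists_ne (1 : center G)
    have hz₀1 : z₀ ≠ 1 := fun h => hne₀ (Subtype.ext h)
    exact ⟨_, pow_mem hz₀ _, orderOf_pow_orderOf_div_prime hp hz₀1 (hdvd z₀)⟩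
  have hz1 : z ≠ 1 := fun h => hp.ne_one (by rw [← hz, h, orderOf_one])
  obtain ⟨w₁, hz₁, hw₁⟩ := exists_orderOf_eq_succ_of_gDeg_eq hreg hz1
  obtain ⟨v, hv⟩ : ∃ v, v ∉ zpowers w₁ := by
    by_contra! h
    exact hnc ⟨w₁, h⟩
  obtain ⟨w₂, hv₂, hw₂⟩ :=
    exists_orderOf_eq_succ_of_gDeg_eq hreg fun (h : v = 1) => hv (h ▸ one_mem _)
  have hzw₂ : z ∉ zpowers w₂ := fun h =>
    hv (zpowers_eq_of_gDeg_eq hreg hp hpk hw₁ hw₂ hz1 hz₁ h ▸ hv₂)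
  have hpow : (w₂ * z) ^ p = w₂ ^ p := by
    have hcomm : Commute w₂ z := mem_center_iff.1 hzc w₂
    rw [hcomm.mul_pow, ← hz, pow_orderOf_eq_one, mul_one]
  have hw₂p : w₂ ^ p ≠ 1 := by
    intro h
    have := Nat.le_of_dvd hp.pos (hw₂.trans hpk.symm ▸ orderOf_dvd_of_pow_eq_one h)
    have := Nat.pow_le_pow_right hp.pos (show 2 ≤ k by omega)
    nlinarith [hp.two_le]
  obtain ⟨w₃, hu₃, hw₃⟩ := exists_orderOf_eq_succ_of_gDeg_eq hreg
    fun (h : w₂ * z = 1) => hw₂p (by rw [← hpow, h, one_pow])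
  have h32 : zpowers w₃ = zpowers w₂ := zpowers_eq_of_gDeg_eq hreg hp hpk hw₃ hw₂ hw₂p
    (hpow ▸ pow_mem hu₃ p) (pow_mem (mem_zpowers w₂) p)
  exact hzw₂ ((zpowers w₂).mul_mem_cancel_left (mem_zpowers w₂) |>.1 (h32 ▸ hu₃))

end RegularPowerGraph

section PrimeExponent

variable {G : Type*} [Group G] [Finite G] {p : ℕ}

lemma gDeg_powerGraph_of_forall_orderOf_eq (hpe : ∀ x : G, x ≠ 1 → orderOf x = p) {x : G}
    (hx : x ≠ 1) : gDeg (powerGraph G) x = p - 1 := by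
  rw [gDeg_powerGraph_of_forall_orderOf_le fun v hv => ?_, hpe x hx]
  have hv1 : v ≠ 1 := by
    rintro rfl
    exact hx (by simpa using hv)
  rw [hpe v hv1, hpe x hx]

lemma isEdgeReachable_powerGraph_one (hpe : ∀ x : G, x ≠ 1 → orderOf x = p) {x : G}
    (hx : x ≠ 1) : (powerGraph G).IsEdgeReachable (p - 1) x 1 := by
  have hC : ((zpowers x : Set G) \ {x}).ncard = p - 1 := by
    rw [Set.ncard_sdiff_singleton_of_mem (mem_zpowers x), ncard_zpowers, hpe x hx]
  rw [← hC]
  refine SimpleGraph.isEdgeReachable_of_forall_adj (fun h => h.2 rfl) fun c ⟨hc, hcx⟩ =>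
    ⟨powerGraph_adj_iff.2 ⟨Ne.symm hcx, Or.inl hc⟩, ?_⟩
  by_cases hc1 : c = 1
  · exact Or.inl hc1
  · exact Or.inr (powerGraph_isUniversal_one (Ne.symm hc1)).symm

lemma isEdgeConnected_powerGraph (hpe : ∀ x : G, x ≠ 1 → orderOf x = p) :
    (powerGraph G).IsEdgeConnected (p - 1) := by
  have h : ∀ x : G, (powerGraph G).IsEdgeReachable (p - 1) x 1 := fun x => by
    by_cases hx : x = 1
    · exact hx ▸ .rfl
    · exact isEdgeReachable_powerGraph_one hpe hx
  exact fun u v => (h u).trans (h v).symm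

lemma minEdgeConnected_powerGraph (hpe : ∀ x : G, x ≠ 1 → orderOf x = p) :
    MinEdgeConnected (powerGraph G) := by
  refine (isEdgeConnected_powerGraph hpe).minEdgeConnected fun e he => ?_
  induction e using Sym2.ind with
  | _ u v =>
    have hadj : (powerGraph G).Adj u v := he
    by_cases hu : u = 1
    · exact ⟨v, Sym2.mem_mk_right u v,
        (gDeg_powerGraph_of_forall_orderOf_eq hpe (hu ▸ hadj.ne.symm)).le⟩
    · exact ⟨u, Sym2.mem_mk_left u v, (gDeg_powerGraph_of_forall_orderOf_eq hpe hu).le⟩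

lemma powerGraph_ne_top (hpe : ∀ x : G, x ≠ 1 → orderOf x = p) (hnc : ¬ IsCyclic G) :
    powerGraph G ≠ ⊤ := by
  intro htop
  have : Nontrivial G := by
    by_contra h
    rw [not_nontrivial_iff_subsingleton] at h
    exact hnc inferInstance
  obtain ⟨x, hx⟩ := exists_ne (1 : G)
  obtain ⟨y, hy⟩ : ∃ y, y ∉ zpowers x := by
    by_contra! h
    exact hnc ⟨x, h⟩
  have hy1 : y ≠ 1 := fun h => hy (h ▸ one_mem _)
  have hadj : (powerGraph G).Adj x y :=
    htop ▸ (SimpleGraph.top_adj x y).2 fun h => hy (h ▸ mem_zpowers x)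
  rcases (powerGraph_adj_iff.1 hadj).2 with h | h
  · exact hy h
  · exact hy (zpowers_eq_of_le_of_orderOf_le (zpowers_le.2 h) (by rw [hpe x hx, hpe y hy1]) ▸
      mem_zpowers y)

end PrimeExponent

/-- A finite group `G` is a non-cyclic group of prime exponent iff its
power graph is non-complete and minimally edge connected. -/
theorem stmt_1 (G : Type*) [Group G] [Fintype G] :
    (¬ IsCyclic G ∧ (Monoid.exponent G).Prime) ↔
      (powerGraph G ≠ ⊤ ∧ MinEdgeConnected (powerGraph G)) := by
  constructor
  · rintro ⟨hnc, hp⟩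
    have hpe : ∀ x : G, x ≠ 1 → orderOf x = Monoid.exponent G := fun x hx =>
      (hp.eq_one_or_self_of_dvd _ (Monoid.order_dvd_exponent x)).resolve_left
        (mt orderOf_eq_one_iff.1 hx)
    exact ⟨powerGraph_ne_top hpe hnc, minEdgeConnected_powerGraph hpe⟩
  · rintro ⟨hne, hmin⟩
    have : Nontrivial G := by
      by_contra h
      rw [not_nontrivial_iff_subsingleton] at h
      exact hne (Subsingleton.elim _ _)
    have hreg : ∀ x : G, x ≠ 1 → gDeg (powerGraph G) x = minDeg (powerGraph G) :=
      fun x hx => hmin.gDeg_eq_minDeg powerGraph_isUniversal_one hx.symm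
    exact ⟨not_isCyclic_of_gDeg_eq hreg hne,
      exponent_eq_succ_of_gDeg_eq hreg ▸ prime_succ_of_gDeg_eq hreg hne⟩
end

section
/- For every n ≥ 3, the enhanced power graph P_E(D_{2n}) of the dihedral group D_{2n} of order 2n is not minimally edge connected. -/
/-!
In every group the identity is adjacent to all other vertices of the enhanced power graph, while a
reflection `sr i` of `D_{2n}` lies in no cyclic subgroup except `{1, sr i}`, so it is a pendant
vertex hanging off `1`. Deleting an edge that avoids `1`, such as `r 1 — r 2` (which exists once
`n ≥ 3`), leaves a graph that is still connected through `1` and still has that pendant vertex.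
A connected graph with a pendant vertex has edge connectivity `1`, so the deletion does not lower
the edge connectivity.
-/

open SimpleGraph DihedralGroup Subgroup

section EdgeConnectivity

variable {V : Type*} {G : SimpleGraph V}

lemma SimpleGraph.connected_of_forall_adj (c : V) (h : ∀ x ≠ c, G.Adj c x) : G.Connected :=
  (connected_iff_exists_forall_reachable G).mpr ⟨c, fun x => by
    rcases eq_or_ne x c with rfl | hx
    · rfl
    · exact (h x hx).reachable⟩

lemma SimpleGraph.not_connected_deleteEdges_of_forall_adj_eq {u v : V}
    (hv : ∀ w, G.Adj v w → w = u) (hvu : v ≠ u) : ¬ (G.deleteEdges {s(v, u)}).Connected := by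
  intro hc
  obtain ⟨p⟩ := hc.preconnected v u
  cases p with
  | nil => exact hvu rfl
  | cons h _ =>
    rw [deleteEdges_adj] at h
    obtain rfl := hv _ h.1
    exact h.2 rfl

lemma edgeConn_le_ncard {S : Set (Sym2 V)} (hS : S ⊆ G.edgeSet)
    (h : ¬ (G.deleteEdges S).Connected) : edgeConn G ≤ S.ncard := by
  rw [edgeConn]
  exact Nat.sInf_le ⟨S, hS, rfl, h⟩

lemma edgeConn_pos [Finite V] (hG : G.Connected) {S : Set (Sym2 V)} (hS : S ⊆ G.edgeSet)
    (h : ¬ (G.deleteEdges S).Connected) : 0 < edgeConn G := by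
  rw [edgeConn, Nat.pos_iff_ne_zero, Ne, Nat.sInf_eq_zero, not_or]
  refine ⟨?_, Set.nonempty_iff_ne_empty.mp ⟨S.ncard, S, hS, rfl, h⟩⟩
  rintro ⟨T, -, hT, hdisc⟩
  rw [Set.ncard_eq_zero] at hT
  exact hdisc (by rwa [hT, deleteEdges_empty])

lemma edgeConn_eq_one_of_forall_adj_eq [Finite V] (hG : G.Connected) {u v : V} (huv : G.Adj v u)
    (hv : ∀ w, G.Adj v w → w = u) : edgeConn G = 1 := by
  have hcut := not_connected_deleteEdges_of_forall_adj_eq hv huv.ne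
  have hsub : {s(v, u)} ⊆ G.edgeSet := Set.singleton_subset_iff.mpr huv
  exact le_antisymm ((edgeConn_le_ncard hsub hcut).trans_eq (Set.ncard_singleton _))
    (edgeConn_pos hG hsub hcut)

lemma not_minEdgeConnected_of_forall_adj [Finite V] {c v : V} {e : Sym2 V}
    (hc : ∀ x ≠ c, G.Adj c x) (hv : ∀ w, G.Adj v w → w = c) (hvc : v ≠ c)
    (he : e ∈ G.edgeSet) (hce : c ∉ e) : ¬ MinEdgeConnected G := by
  intro hmin
  have hcH : ∀ x ≠ c, (G.deleteEdges {e}).Adj c x := fun x hx =>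
    deleteEdges_adj.mpr ⟨hc x hx, fun h => hce (Set.mem_singleton_iff.mp h ▸ Sym2.mem_mk_left c x)⟩
  have hG := edgeConn_eq_one_of_forall_adj_eq (connected_of_forall_adj c hc) (hc v hvc).symm hv
  have hH := edgeConn_eq_one_of_forall_adj_eq (connected_of_forall_adj c hcH) (hcH v hvc).symm
    fun w hw => hv w (deleteEdges_le _ hw)
  have := hmin e he
  rw [hG, hH] at this
  omega

end EdgeConnectivity

lemma enhancedPowerGraph_adj {G : Type*} [Group G] {x y : G} :
    (enhancedPowerGraph G).Adj x y ↔ x ≠ y ∧ ∃ z, x ∈ zpowers z ∧ y ∈ zpowers z := by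
  rw [enhancedPowerGraph, fromRel_adj]
  refine and_congr_right fun _ => ⟨?_, Or.inl⟩
  rintro (h | ⟨z, hy, hx⟩)
  exacts [h, ⟨z, hx, hy⟩]

lemma enhancedPowerGraph_one_adj {G : Type*} [Group G] {x : G} (hx : x ≠ 1) :
    (enhancedPowerGraph G).Adj 1 x :=
  enhancedPowerGraph_adj.mpr ⟨hx.symm, x, one_mem _, mem_zpowers x⟩

namespace DihedralGroup

variable {n : ℕ}

lemma r_natCast_ne {a b : ℕ} (ha : a < n) (hb : b < n) (hab : a ≠ b) :
    (r a : DihedralGroup n) ≠ r b := by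
  rw [Ne, r.injEq, ZMod.natCast_eq_natCast_iff', Nat.mod_eq_of_lt ha, Nat.mod_eq_of_lt hb]
  exact hab

lemma sr_ne_one (i : ZMod n) : (sr i : DihedralGroup n) ≠ 1 := by
  rw [one_def]
  nofun

lemma mem_zpowers_sr {i : ZMod n} {y : DihedralGroup n} :
    y ∈ zpowers (sr i) ↔ y = 1 ∨ y = sr i := by
  constructor
  · intro h
    obtain ⟨k, rfl⟩ := mem_zpowers_iff.mp h
    rw [← zpow_mod_orderOf, orderOf_sr]
    rcases Int.emod_two_eq k with h | h <;> simp [h]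
  · rintro (rfl | rfl)
    exacts [one_mem _, mem_zpowers _]

lemma sr_mem_zpowers_iff {i : ZMod n} {z : DihedralGroup n} :
    sr i ∈ zpowers z ↔ z = sr i := by
  refine ⟨fun h => ?_, fun h => h ▸ mem_zpowers _⟩
  cases z with
  | r j =>
    obtain ⟨k, hk⟩ := mem_zpowers_iff.mp h
    rw [r_zpow] at hk
    cases hk
  | sr j =>
    rcases mem_zpowers_sr.mp h with h | h
    · exact absurd h (sr_ne_one i)
    · exact h.symm

lemma enhancedPowerGraph_sr_adj {i : ZMod n} {y : DihedralGroup n}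
    (h : (enhancedPowerGraph (DihedralGroup n)).Adj (sr i) y) : y = 1 := by
  obtain ⟨hne, z, hs, hy⟩ := enhancedPowerGraph_adj.mp h
  rw [sr_mem_zpowers_iff.mp hs, mem_zpowers_sr] at hy
  exact hy.resolve_right hne.symm

end DihedralGroup

/-- For `n ≥ 3`, the enhanced power graph of the dihedral group of
order `2n` is not minimally edge connected. -/
theorem stmt_4 (n : ℕ) (hn : 3 ≤ n) :
    ¬ MinEdgeConnected (enhancedPowerGraph (DihedralGroup n)) := by
  have : NeZero n := ⟨by omega⟩
  have h1 : (r 1 : DihedralGroup n) ≠ 1 := by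
    simpa using r_natCast_ne (n := n) (a := 1) (b := 0) (by omega) (by omega) (by omega)
  have h2 : (r 2 : DihedralGroup n) ≠ 1 := by
    simpa using r_natCast_ne (n := n) (a := 2) (b := 0) (by omega) (by omega) (by omega)
  have h12 : (r 1 : DihedralGroup n) ≠ r 2 := by
    simpa using r_natCast_ne (n := n) (a := 1) (b := 2) (by omega) (by omega) (by omega)
  refine not_minEdgeConnected_of_forall_adj (c := 1) (v := sr 0) (e := s(r 1, r 2))
    (fun _ => enhancedPowerGraph_one_adj) (fun _ => enhancedPowerGraph_sr_adj) (sr_ne_one 0)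
    ?_ ?_
  · refine enhancedPowerGraph_adj.mpr ⟨h12, r 1, mem_zpowers _, 2, ?_⟩
    simp
  · simp [h1.symm, h2.symm]
end

section
/- For every n ≥ 2, the enhanced power graph P_E(SD_{8n}) of the semidihedral group SD_{8n} of order 8n is not minimally edge connected. -/
/-- The relators of the semidihedral group
`SD_{8n} = ⟨a, b : a^{4n} = b^2 = e, b a = a^{2n-1} b⟩`, where the generator `a`
is `FreeGroup.of 0` and `b` is `FreeGroup.of 1`. -/
def sdRels (n : ℕ) : Set (FreeGroup (Fin 2)) :=
  {FreeGroup.of 0 ^ (4 * n), FreeGroup.of 1 ^ 2,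
    (FreeGroup.of 1 * FreeGroup.of 0) *
      (FreeGroup.of 0 ^ (2 * n - 1) * FreeGroup.of 1)⁻¹}

/-- The semidihedral group `SD_{8n}` of order `8n`, given by the presentation
`⟨a, b : a^{4n} = b^2 = e, b a = a^{2n-1} b⟩`. -/
abbrev SemidihedralGroup (n : ℕ) : Type := PresentedGroup (sdRels n)

namespace SimpleGraph

variable {V : Type*} {G : SimpleGraph V}

lemma not_connected_deleteEdges_of_pendant {u v : V} (huv : G.Adj v u)
    (hv : ∀ w, G.Adj v w → w = u) : ¬ (G.deleteEdges {s(v, u)}).Connected := by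
  intro h
  obtain ⟨walk⟩ := h.preconnected v u
  cases walk with
  | nil => exact huv.ne rfl
  | cons hadj _ =>
    rw [deleteEdges_adj, Set.mem_singleton_iff, hv _ hadj.1] at hadj
    exact hadj.2 rfl

lemma edgeConn_eq_one_of_pendant [Finite V] (hG : G.Connected) {u v : V} (huv : G.Adj v u)
    (hv : ∀ w, G.Adj v w → w = u) : edgeConn G = 1 := by
  have hbridge : ∃ S ⊆ G.edgeSet, S.ncard = 1 ∧ ¬ (G.deleteEdges S).Connected :=
    ⟨{s(v, u)}, Set.singleton_subset_iff.mpr huv, Set.ncard_singleton _,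
      not_connected_deleteEdges_of_pendant huv hv⟩
  refine le_antisymm (Nat.sInf_le hbridge) (Nat.one_le_iff_ne_zero.mpr fun h => ?_)
  obtain ⟨S, -, hS, hdisc⟩ | hempty := Nat.sInf_eq_zero.mp h
  · rw [Set.ncard_eq_zero] at hS
    rw [hS, deleteEdges_empty] at hdisc
    exact hdisc hG
  · exact hempty.subset hbridge

lemma not_minEdgeConnected_of_pendant [Finite V] (hG : G.Connected) {u v : V}
    (huv : G.Adj v u) (hv : ∀ w, G.Adj v w → w = u) {e : Sym2 V} (he : e ∈ G.edgeSet)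
    (hev : e ≠ s(v, u)) (hGe : (G.deleteEdges {e}).Connected) : ¬ MinEdgeConnected G := by
  intro hmin
  have h := hmin e he
  have huv' : (G.deleteEdges {e}).Adj v u := (deleteEdges_adj ..).mpr ⟨huv, fun h => hev h.symm⟩
  rw [edgeConn_eq_one_of_pendant hG huv hv,
    edgeConn_eq_one_of_pendant hGe huv' fun w hw => hv w hw.1] at h
  omega

end SimpleGraph

namespace EnhancedPowerGraph

open SimpleGraph Subgroup

variable {G : Type*} [Group G]

lemma adj_iff {x y : G} :
    (enhancedPowerGraph G).Adj x y ↔ x ≠ y ∧ ∃ z, x ∈ zpowers z ∧ y ∈ zpowers z := by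
  simp only [enhancedPowerGraph, fromRel_adj, and_comm (a := y ∈ _), or_self]

lemma one_adj {x : G} (hx : x ≠ 1) : (enhancedPowerGraph G).Adj 1 x :=
  adj_iff.mpr ⟨hx.symm, x, one_mem _, mem_zpowers x⟩

lemma connected : (enhancedPowerGraph G).Connected := by
  refine (connected_iff_exists_forall_reachable _).mpr ⟨1, fun x => ?_⟩
  obtain rfl | hx := eq_or_ne x 1
  exacts [Reachable.rfl, (one_adj hx).reachable]

lemma connected_deleteEdges_one {g : G} (hg : g ^ 2 ≠ 1) :
    ((enhancedPowerGraph G).deleteEdges {s(1, g)}).Connected := by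
  have hg1 : g ≠ 1 := fun h => hg (by rw [h, one_pow])
  have hgg : g ^ 2 ≠ g := fun h => hg1 (by simpa [pow_two] using h)
  have one_adj' {x : G} (hx1 : x ≠ 1) (hxg : x ≠ g) :
      ((enhancedPowerGraph G).deleteEdges {s(1, g)}).Adj 1 x := by
    refine (deleteEdges_adj ..).mpr ⟨one_adj hx1, ?_⟩
    rw [Set.mem_singleton_iff, Sym2.eq_iff]
    tauto
  have g_adj_sq : ((enhancedPowerGraph G).deleteEdges {s(1, g)}).Adj g (g ^ 2) := by
    refine (deleteEdges_adj ..).mpr ⟨adj_iff.mpr ⟨hgg.symm, g, mem_zpowers g, ?_⟩, ?_⟩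
    · exact pow_mem (mem_zpowers g) 2
    · rw [Set.mem_singleton_iff, Sym2.eq_iff]
      tauto
  refine (connected_iff_exists_forall_reachable _).mpr ⟨1, fun x => ?_⟩
  obtain rfl | hx1 := eq_or_ne x 1
  · exact Reachable.rfl
  obtain rfl | hxg := eq_or_ne x g
  · exact (one_adj' hg hgg).reachable.trans g_adj_sq.symm.reachable
  · exact (one_adj' hx1 hxg).reachable

lemma eq_one_of_adj_of_maximal {b y : G} (hb : b ^ 2 = 1)
    (hmax : ∀ z, b ∈ zpowers z → z = b) (h : (enhancedPowerGraph G).Adj b y) : y = 1 := by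
  obtain ⟨hby, z, hbz, hyz⟩ := adj_iff.mp h
  obtain ⟨k, rfl⟩ := mem_zpowers_iff.mp (hmax z hbz ▸ hyz)
  obtain ⟨m, rfl | rfl⟩ := Int.even_or_odd' k
  · rw [zpow_mul, zpow_two, ← pow_two, hb, one_zpow]
  · rw [zpow_add_one, zpow_mul, zpow_two, ← pow_two, hb, one_zpow, one_mul] at hby
    exact absurd rfl hby

end EnhancedPowerGraph

namespace SemidihedralGroup

open Subgroup

variable (n : ℕ)

def a : SemidihedralGroup n := PresentedGroup.of 0

def b : SemidihedralGroup n := PresentedGroup.of 1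

lemma a_pow_four_mul : a n ^ (4 * n) = 1 := by
  have h := PresentedGroup.one_of_mem (rels := sdRels n) (x := FreeGroup.of 0 ^ (4 * n))
    (by simp [sdRels])
  rwa [map_pow] at h

lemma b_mul_b : b n * b n = 1 := by
  have h := PresentedGroup.one_of_mem (rels := sdRels n) (x := FreeGroup.of 1 ^ 2)
    (by simp [sdRels])
  rwa [map_pow, pow_two] at h

lemma b_mul_a : b n * a n = a n ^ (2 * n - 1) * b n := by
  have h := PresentedGroup.one_of_mem (rels := sdRels n)
    (x := (FreeGroup.of 1 * FreeGroup.of 0) * (FreeGroup.of 0 ^ (2 * n - 1) * FreeGroup.of 1)⁻¹)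
    (by simp [sdRels])
  rwa [map_mul, map_mul, map_inv, map_mul, map_pow, mul_inv_eq_one] at h

lemma b_mul_a_zpow (k : ℤ) : b n * a n ^ k = a n ^ (((2 * n - 1 : ℕ) : ℤ) * k) * b n := by
  have hconj : b n * a n * (b n)⁻¹ = a n ^ (2 * n - 1) := by
    rw [b_mul_a, mul_inv_cancel_right]
  rw [zpow_mul, zpow_natCast, ← hconj, conj_zpow, inv_mul_cancel_right]

lemma exists_eq_zpow_or_eq_zpow_mul_b (x : SemidihedralGroup n) :
    ∃ i : ℤ, x = a n ^ i ∨ x = a n ^ i * b n := by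
  let normalForms : Subgroup (SemidihedralGroup n) :=
    { carrier := {x | ∃ i : ℤ, x = a n ^ i ∨ x = a n ^ i * b n}
      one_mem' := ⟨0, Or.inl (zpow_zero _).symm⟩
      mul_mem' := by
        rintro _ _ ⟨i, rfl | rfl⟩ ⟨j, rfl | rfl⟩
        · exact ⟨i + j, Or.inl (zpow_add ..).symm⟩
        · exact ⟨i + j, Or.inr (by rw [zpow_add, mul_assoc])⟩
        · refine ⟨i + ((2 * n - 1 : ℕ) : ℤ) * j, Or.inr ?_⟩
          rw [mul_assoc, b_mul_a_zpow, ← mul_assoc, ← zpow_add]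
        · refine ⟨i + ((2 * n - 1 : ℕ) : ℤ) * j, Or.inl ?_⟩
          rw [mul_assoc, ← mul_assoc (b n), b_mul_a_zpow, mul_assoc, b_mul_b, mul_one,
            ← zpow_add]
      inv_mem' := by
        rintro _ ⟨i, rfl | rfl⟩
        · exact ⟨-i, Or.inl (zpow_neg ..).symm⟩
        · refine ⟨((2 * n - 1 : ℕ) : ℤ) * -i, Or.inr ?_⟩
          rw [mul_inv_rev, inv_eq_of_mul_eq_one_right (b_mul_b n), ← zpow_neg, b_mul_a_zpow] }
  refine PresentedGroup.generated_by _ normalForms (fun j => ?_) x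
  fin_cases j
  exacts [⟨1, Or.inl (zpow_one _).symm⟩, ⟨0, Or.inr (by rw [zpow_zero, one_mul]; rfl)⟩]

lemma finite (hn : 0 < n) : Finite (SemidihedralGroup n) := by
  have hfin : (zpowers (a n) : Set (SemidihedralGroup n)).Finite :=
    (isOfFinOrder_iff_pow_eq_one.mpr ⟨4 * n, by omega, a_pow_four_mul n⟩).finite_zpowers
  have := hfin.to_subtype
  refine Finite.of_surjective (fun p : zpowers (a n) × Bool => (p.1 : _) * cond p.2 (b n) 1) ?_
  intro x
  obtain ⟨i, rfl | rfl⟩ := exists_eq_zpow_or_eq_zpow_mul_b n x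
  · exact ⟨(⟨a n ^ i, zpow_mem_zpowers _ _⟩, false), mul_one _⟩
  · exact ⟨(⟨a n ^ i, zpow_mem_zpowers _ _⟩, true), rfl⟩

variable {n}

lemma natCast_two_mul_sub_one_mul_self (hn : 0 < n) :
    ((2 * n - 1 : ℕ) : ZMod (4 * n)) * ((2 * n - 1 : ℕ) : ZMod (4 * n)) = 1 := by
  have h : ((4 * n : ℕ) : ZMod (4 * n)) = 0 := ZMod.natCast_self _
  push_cast [Nat.cast_sub (show 1 ≤ 2 * n by omega)] at h ⊢
  linear_combination ((n : ZMod (4 * n)) - 1) * h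

-- `a` acts as `x ↦ x + 1` and `b` as `x ↦ (2n - 1) x`: enough to read off the order of `a`
-- and to separate `b` from `⟨a⟩`.
def toPerm (hn : 0 < n) : SemidihedralGroup n →* Equiv.Perm (ZMod (4 * n)) :=
  PresentedGroup.toGroup (f := ![Equiv.addRight 1,
    Units.mulLeft (Units.mkOfMulEqOne _ _ (natCast_two_mul_sub_one_mul_self hn))]) <| by
    rintro r (rfl | rfl | rfl)
    · ext x
      simp
    · ext x
      simp [pow_two, ← mul_assoc, natCast_two_mul_sub_one_mul_self hn]
    · rw [map_mul, map_inv, mul_inv_eq_one]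
      ext x
      simp [mul_add]

lemma toPerm_a_zpow (hn : 0 < n) (k : ℤ) (x : ZMod (4 * n)) :
    toPerm hn (a n ^ k) x = x + k := by
  simp [toPerm, a]

lemma toPerm_b (hn : 0 < n) (x : ZMod (4 * n)) :
    toPerm hn (b n) x = ((2 * n - 1 : ℕ) : ZMod (4 * n)) * x := by
  simp [toPerm, b]

lemma orderOf_a (hn : 0 < n) : orderOf (a n) = 4 * n := by
  refine Nat.dvd_antisymm (orderOf_dvd_of_pow_eq_one (a_pow_four_mul n)) ?_
  have h := toPerm_a_zpow hn (orderOf (a n)) 0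
  rw [zpow_natCast, pow_orderOf_eq_one, map_one, Equiv.Perm.one_apply, zero_add,
    Int.cast_natCast, eq_comm] at h
  exact (ZMod.natCast_eq_zero_iff _ _).mp h

lemma a_zpow_ne_b (hn : 2 ≤ n) (k : ℤ) : a n ^ k ≠ b n := by
  intro h
  have hn0 : 0 < n := by omega
  have h0 := toPerm_a_zpow hn0 k 0
  have h1 := toPerm_a_zpow hn0 k 1
  rw [h, toPerm_b] at h0 h1
  rw [mul_zero, zero_add] at h0
  rw [mul_one, ← h0, add_zero] at h1
  -- `b` would act trivially, i.e. `2n - 1 ≡ 1 (mod 4n)`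
  have hdvd : 4 * n ∣ 2 * n - 2 := by
    have hsub : ((2 * n - 2 : ℕ) : ZMod (4 * n)) = ((2 * n - 1 : ℕ) : ZMod (4 * n)) - 1 := by
      push_cast [Nat.cast_sub (show 2 ≤ 2 * n by omega), Nat.cast_sub (show 1 ≤ 2 * n by omega)]
      ring
    rw [← ZMod.natCast_eq_zero_iff, hsub, h1, sub_self]
  have := Nat.le_of_dvd (by omega) hdvd
  omega

lemma sq_a_zpow_mul_b (hn : 0 < n) (i : ℤ) : (a n ^ i * b n) ^ 2 = a n ^ (2 * n * i) := by
  rw [pow_two, mul_assoc, ← mul_assoc (b n), b_mul_a_zpow, mul_assoc, b_mul_b, mul_one,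
    ← zpow_add]
  push_cast [Nat.cast_sub (show 1 ≤ 2 * n by omega)]
  ring_nf

lemma eq_b_of_b_mem_zpowers (hn : 2 ≤ n) {z : SemidihedralGroup n} (hz : b n ∈ zpowers z) :
    z = b n := by
  obtain ⟨k, hk⟩ := mem_zpowers_iff.mp hz
  obtain ⟨i, rfl | rfl⟩ := exists_eq_zpow_or_eq_zpow_mul_b n z
  · rw [← zpow_mul] at hk
    exact absurd hk (a_zpow_ne_b hn _)
  obtain ⟨m, rfl | rfl⟩ := Int.even_or_odd' k
  · rw [zpow_mul, zpow_two, ← pow_two, sq_a_zpow_mul_b (by omega), ← zpow_mul] at hk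
    exact absurd hk (a_zpow_ne_b hn _)
  -- Squares of `z = a^i b` lie in `⟨a⟩`, so `b` must be an odd power `z^(2m+1) = a^(2nim+i) b`.
  rw [zpow_add_one, zpow_mul, zpow_two, ← pow_two, sq_a_zpow_mul_b (by omega), ← zpow_mul,
    ← mul_assoc, ← zpow_add, mul_eq_right, ← orderOf_dvd_iff_zpow_eq_one,
    orderOf_a (by omega)] at hk
  -- `4n ∣ 2n i m + i` forces `i` even, and then `4n ∣ i`
  obtain ⟨t, rfl⟩ : 2 ∣ i :=
    (dvd_add_right ⟨n * i * m, by ring⟩).mp (dvd_trans ⟨2 * n, by push_cast; ring⟩ hk)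
  have ht : a n ^ (2 * t) = 1 := by
    rw [← orderOf_dvd_iff_zpow_eq_one, orderOf_a (by omega)]
    exact (dvd_add_right ⟨t * m, by push_cast; ring⟩).mp hk
  rw [ht, one_mul]

end SemidihedralGroup

open SemidihedralGroup

/-- For `n ≥ 2`, the enhanced power graph of the semidihedral group
of order `8n` is not minimally edge connected. -/
theorem stmt_6 (n : ℕ) (hn : 2 ≤ n) :
    ¬ MinEdgeConnected (enhancedPowerGraph (SemidihedralGroup n)) := by
  have := SemidihedralGroup.finite (n := n) (by omega)
  have ha_sq : a n ^ 2 ≠ 1 :=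
    pow_ne_one_of_lt_orderOf (by omega) (by rw [orderOf_a (by omega)]; omega)
  have ha_ne_b : a n ≠ b n := by simpa using a_zpow_ne_b hn 1
  have ha_ne_one : a n ≠ 1 := fun h => ha_sq (by rw [h, one_pow])
  have hb_ne_one : b n ≠ 1 := fun h => a_zpow_ne_b hn 0 (by rw [zpow_zero, h])
  refine SimpleGraph.not_minEdgeConnected_of_pendant EnhancedPowerGraph.connected
    (EnhancedPowerGraph.one_adj hb_ne_one).symm
    (fun y => EnhancedPowerGraph.eq_one_of_adj_of_maximal (by rw [pow_two, b_mul_b])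
      fun z => eq_b_of_b_mem_zpowers hn)
    (EnhancedPowerGraph.one_adj ha_ne_one) ?_
    (EnhancedPowerGraph.connected_deleteEdges_one ha_sq)
  rw [Ne, Sym2.eq_iff]
  tauto
end

section
/- Let G be a finite group. Then the enhanced power graph P_E(G) is minimally connected if and only if G is cyclic or G is an elementary abelian 2-group (i.e., G ≅ Z_2 × Z_2 × ⋯ × Z_2). -/
open SimpleGraph Set

section GraphHelpers
variable {V : Type*}

/-- The set over which vertexConn takes the sInf. -/
def cutSet (Γ : SimpleGraph V) : Set ℕ :=
  {n : ℕ | ∃ S : Set V, S.ncard = n ∧ Sᶜ.Nonempty ∧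
    (¬ (Γ.induce Sᶜ).Preconnected ∨ Sᶜ.ncard = 1)}

lemma vertexConn_eq (Γ : SimpleGraph V) : vertexConn Γ = sInf (cutSet Γ) := rfl

lemma cutSet_nonempty [Nonempty V] (Γ : SimpleGraph V) : (cutSet Γ).Nonempty := by
  obtain ⟨v⟩ := ‹Nonempty V›
  exact ⟨({v}ᶜ : Set V).ncard, {v}ᶜ, rfl, by simp, Or.inr <| by simp⟩

private lemma walk_closed {Γ : SimpleGraph V} {P : V → Prop}
    (hP : ∀ x y, P x → Γ.Adj x y → P y) : ∀ {u v : V}, Γ.Walk u v → P u → P v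
  | _, _, SimpleGraph.Walk.nil, hu => hu
  | _, _, SimpleGraph.Walk.cons h p, hu => walk_closed hP p (hP _ _ hu h)

lemma reach_closed {Γ : SimpleGraph V} {P : V → Prop}
    (hP : ∀ x y, P x → Γ.Adj x y → P y) {u v : V} (hr : Γ.Reachable u v) (hu : P u) : P v := by
  obtain ⟨w⟩ := hr; exact walk_closed hP w hu

private lemma walk_reach {Γ Γ' : SimpleGraph V}
    (h : ∀ u v, Γ.Adj u v → Γ'.Reachable u v) : ∀ {u v : V}, Γ.Walk u v → Γ'.Reachable u v
  | _, _, SimpleGraph.Walk.nil => Reachable.refl _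
  | _, _, SimpleGraph.Walk.cons h' p => (h _ _ h').trans (walk_reach h p)

lemma reach_of_reach {Γ Γ' : SimpleGraph V}
    (h : ∀ u v, Γ.Adj u v → Γ'.Reachable u v) {u v : V} (hr : Γ.Reachable u v) :
    Γ'.Reachable u v := by
  obtain ⟨w⟩ := hr; exact walk_reach h w

/-- A vertex with no neighbours reaches only itself. -/
lemma isolated_reach {Γ : SimpleGraph V} {x : V} (h : ∀ w, ¬ Γ.Adj x w) {b : V}
    (hr : Γ.Reachable x b) : x = b := by
  refine reach_closed (P := fun u => x = u) ?_ hr rfl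
  rintro u v rfl hadj
  exact absurd hadj (h v)

lemma vertexConn_deleteEdges_le [Nonempty V] (Γ : SimpleGraph V) (E : Set (Sym2 V)) :
    vertexConn (Γ.deleteEdges E) ≤ vertexConn Γ := by
  rw [vertexConn_eq, vertexConn_eq]
  have hsub : cutSet Γ ⊆ cutSet (Γ.deleteEdges E) := by
    rintro n ⟨S, h1, h2, h3⟩
    refine ⟨S, h1, h2, ?_⟩
    rcases h3 with h3 | h3
    · refine Or.inl fun hpre => h3 fun a b => ?_
      refine Reachable.mono (fun u v huv => ?_) (hpre a b)
      simp only [comap_adj, Function.Embedding.coe_subtype, deleteEdges_adj] at huv ⊢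
      exact huv.1
    · exact Or.inr h3
  exact Nat.sInf_le (hsub (Nat.sInf_mem (cutSet_nonempty Γ)))

end GraphHelpers

section Complete
variable {V : Type*} [Fintype V]

lemma ncard_compl_singleton (v : V) : ({v}ᶜ : Set V).ncard = Nat.card V - 1 := by
  have h := Set.ncard_add_ncard_compl ({v} : Set V)
  simp only [Set.ncard_singleton] at h
  omega

lemma ncard_compl_pair {x y : V} (hxy : x ≠ y) :
    ({x, y}ᶜ : Set V).ncard = Nat.card V - 2 := by
  have h := Set.ncard_add_ncard_compl ({x, y} : Set V)
  rw [Set.ncard_pair hxy] at h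
  omega

lemma ncard_compl_eq {S : Set V} : S.ncard = Nat.card V - Sᶜ.ncard := by
  have h := Set.ncard_add_ncard_compl S
  omega

lemma vertexConn_complete [Nonempty V] {Γ : SimpleGraph V}
    (hcomp : ∀ x y : V, x ≠ y → Γ.Adj x y) : vertexConn Γ = Nat.card V - 1 := by
  have key : ∀ m ∈ cutSet Γ, m = Nat.card V - 1 := by
    rintro m ⟨S, rfl, hne, h | h⟩
    · exfalso
      apply h
      intro a b
      by_cases hab : a = b
      · exact hab ▸ Reachable.refl _
      · exact Adj.reachable (hcomp (a : V) b (fun hc => hab (Subtype.ext hc)))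
    · rw [ncard_compl_eq, h]
  have hmem := Nat.sInf_mem (cutSet_nonempty Γ)
  rw [vertexConn_eq]
  exact key _ hmem

lemma vertexConn_complete_delete [Nonempty V] {Γ : SimpleGraph V}
    (hcomp : ∀ x y : V, x ≠ y → Γ.Adj x y) {x y : V} (hxy : x ≠ y) :
    vertexConn (Γ.deleteEdges {s(x, y)}) = Nat.card V - 2 := by
  have hcard2 : 2 ≤ Nat.card V := by
    have := Set.ncard_add_ncard_compl ({x, y} : Set V)
    rw [Set.ncard_pair hxy] at this
    omega
  -- membership : the complement of {x, y} is a cut set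
  have hub : vertexConn (Γ.deleteEdges {s(x, y)}) ≤ Nat.card V - 2 := by
    rw [vertexConn_eq]
    apply Nat.sInf_le
    refine ⟨({x, y} : Set V)ᶜ, ncard_compl_pair hxy, by rw [compl_compl]; exact ⟨x, by simp⟩, Or.inl ?_⟩
    intro hpre
    have hx : (x : V) ∈ ({x, y}ᶜᶜ : Set V) := by simp
    have hy : (y : V) ∈ ({x, y}ᶜᶜ : Set V) := by simp
    have := hpre ⟨x, hx⟩ ⟨y, hy⟩
    have heq : x = y := by
      refine congrArg Subtype.val (isolated_reach (x := (⟨x, hx⟩ : ({x,y}ᶜᶜ : Set V))) ?_ this)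
      rintro ⟨w, hw⟩ hadj
      simp only [comap_adj, Function.Embedding.coe_subtype, deleteEdges_adj,
        Set.mem_singleton_iff] at hadj
      simp only [compl_compl, Set.mem_insert_iff, Set.mem_singleton_iff] at hw
      rcases hw with rfl | rfl
      · exact hadj.1.ne rfl
      · exact hadj.2 rfl
    exact hxy heq
  -- lower bound
  have hlb : ∀ m ∈ cutSet (Γ.deleteEdges {s(x, y)}), Nat.card V - 2 ≤ m := by
    rintro m ⟨S, rfl, hne, h | h⟩
    · by_contra hlt
      push_neg at hlt
      have h3 : 3 ≤ Sᶜ.ncard := by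
        have := Set.ncard_add_ncard_compl S
        omega
      apply h
      intro a b
      by_cases hab : a = b
      · exact hab ▸ Reachable.refl _
      have hab' : (a : V) ≠ b := fun hc => hab (Subtype.ext hc)
      by_cases hedge : s((a : V), (b : V)) = s(x, y)
      · -- find a third vertex
        obtain ⟨w, hwS, hwab⟩ : ∃ w ∈ Sᶜ, w ∉ ({(a : V), (b : V)} : Set V) := by
          by_contra hc
          push_neg at hc
          have : Sᶜ.ncard ≤ 2 := le_trans (Set.ncard_le_ncard hc (Set.toFinite _))
            (le_trans (Set.ncard_insert_le _ _) (by simp))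
          omega
        simp only [Set.mem_insert_iff, Set.mem_singleton_iff, not_or] at hwab
        have hwa : s((a : V), w) ≠ s(x, y) := by
          rw [← hedge]
          intro heq
          rcases Sym2.eq_iff.mp heq with ⟨-, h2⟩ | ⟨h1, -⟩
          · exact hwab.2 h2
          · exact hab' h1
        have hwb : s(w, (b : V)) ≠ s(x, y) := by
          rw [← hedge]
          intro heq
          rcases Sym2.eq_iff.mp heq with ⟨h1, -⟩ | ⟨-, h2⟩
          · exact hwab.1 h1
          · exact hab' h2.symm
        have h1 : ((Γ.deleteEdges {s(x, y)}).induce Sᶜ).Adj a ⟨w, hwS⟩ := by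
          simp only [comap_adj, Function.Embedding.coe_subtype, deleteEdges_adj,
            Set.mem_singleton_iff]
          exact ⟨hcomp _ _ (fun hc => hwab.1 hc.symm), hwa⟩
        have h2 : ((Γ.deleteEdges {s(x, y)}).induce Sᶜ).Adj ⟨w, hwS⟩ b := by
          simp only [comap_adj, Function.Embedding.coe_subtype, deleteEdges_adj,
            Set.mem_singleton_iff]
          exact ⟨hcomp _ _ hwab.2, hwb⟩
        exact (h1.reachable).trans h2.reachable
      · refine Adj.reachable ?_
        simp only [comap_adj, Function.Embedding.coe_subtype, deleteEdges_adj,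
          Set.mem_singleton_iff]
        exact ⟨hcomp _ _ hab', hedge⟩
    · rw [ncard_compl_eq, h]; omega
  have hmem := Nat.sInf_mem (cutSet_nonempty (Γ.deleteEdges {s(x, y)}))
  rw [vertexConn_eq] at hub ⊢
  exact le_antisymm hub (hlb _ hmem)

end Complete

section GroupBasics
set_option linter.unusedSectionVars false
variable {G : Type*} [Group G] [Fintype G]

lemma epg_adj_iff {x y : G} : (enhancedPowerGraph G).Adj x y ↔
    x ≠ y ∧ ∃ z : G, x ∈ Subgroup.zpowers z ∧ y ∈ Subgroup.zpowers z := by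
  rw [enhancedPowerGraph, fromRel_adj]
  constructor
  · rintro ⟨hne, h | ⟨z, hz1, hz2⟩⟩
    · exact ⟨hne, h⟩
    · exact ⟨hne, z, hz2, hz1⟩
  · rintro ⟨hne, h⟩; exact ⟨hne, Or.inl h⟩

lemma epg_adj_one {x : G} (hx : x ≠ 1) : (enhancedPowerGraph G).Adj 1 x :=
  epg_adj_iff.mpr ⟨Ne.symm hx, x, Subgroup.one_mem _, Subgroup.mem_zpowers x⟩

lemma epg_adj_inv {a u : G} (h : (enhancedPowerGraph G).Adj a u) (hne : a⁻¹ ≠ u) :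
    (enhancedPowerGraph G).Adj a⁻¹ u := by
  obtain ⟨-, z, hz1, hz2⟩ := epg_adj_iff.mp h
  exact epg_adj_iff.mpr ⟨hne, z, (Subgroup.zpowers z).inv_mem hz1, hz2⟩

lemma epg_reach_one (x : G) : (enhancedPowerGraph G).Reachable 1 x := by
  by_cases hx : x = 1
  · exact hx ▸ Reachable.refl _
  · exact (epg_adj_one hx).reachable

lemma epg_induce_univ_preconnected :
    ((enhancedPowerGraph G).induce (Set.univ : Set G)).Preconnected := by
  intro a b
  have h1 : ((enhancedPowerGraph G).induce (Set.univ : Set G)).Reachable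
      ⟨1, Set.mem_univ 1⟩ a := by
    by_cases hx : (a : G) = 1
    · have ha : a = ⟨1, Set.mem_univ 1⟩ := Subtype.ext hx
      rw [ha]
    · refine Adj.reachable ?_
      simp only [comap_adj, Function.Embedding.coe_subtype]
      exact epg_adj_one hx
  have h2 : ((enhancedPowerGraph G).induce (Set.univ : Set G)).Reachable
      ⟨1, Set.mem_univ 1⟩ b := by
    by_cases hx : (b : G) = 1
    · have hb : b = ⟨1, Set.mem_univ 1⟩ := Subtype.ext hx
      rw [hb]
    · refine Adj.reachable ?_
      simp only [comap_adj, Function.Embedding.coe_subtype]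
      exact epg_adj_one hx
  exact h1.symm.trans h2

lemma epg_complete_of_cyclic (h : IsCyclic G) {x y : G} (hxy : x ≠ y) :
    (enhancedPowerGraph G).Adj x y := by
  obtain ⟨g, hg⟩ := h.exists_generator
  exact epg_adj_iff.mpr ⟨hxy, g, hg x, hg y⟩

lemma exists_nonadj (h : ¬ IsCyclic G) :
    ∃ u v : G, u ≠ v ∧ ¬ (enhancedPowerGraph G).Adj u v := by
  by_contra hc
  push_neg at hc
  apply h
  obtain ⟨g, hg⟩ := Finite.exists_max (orderOf : G → ℕ)
  refine ⟨⟨g, fun x => ?_⟩⟩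
  show x ∈ Subgroup.zpowers g
  by_cases hxg : x = g
  · exact hxg ▸ Subgroup.mem_zpowers g
  · obtain ⟨-, z, hxz, hgz⟩ := epg_adj_iff.mp (hc x g hxg)
    have h1 : orderOf g ∣ orderOf z := orderOf_dvd_of_mem_zpowers hgz
    have h2 : orderOf z = orderOf g :=
      le_antisymm (hg z) (Nat.le_of_dvd (orderOf_pos z) h1)
    have hle : Subgroup.zpowers g ≤ Subgroup.zpowers z := Subgroup.zpowers_le.mpr hgz
    have heq : Subgroup.zpowers g = Subgroup.zpowers z := by
      apply SetLike.ext'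
      apply Set.eq_of_subset_of_ncard_le hle
      rw [← Nat.card_coe_set_eq, ← Nat.card_coe_set_eq]
      have e1 : Nat.card ((Subgroup.zpowers g : Set G)) = orderOf g := Nat.card_zpowers g
      have e2 : Nat.card ((Subgroup.zpowers z : Set G)) = orderOf z := Nat.card_zpowers z
      rw [e1, e2, h2]
    rw [heq]; exact hxz

end GroupBasics

section Star
set_option linter.unusedSectionVars false
variable {G : Type*} [Group G] [Fintype G]

lemma mem_zpowers_sq {z x : G} (hz : z ^ 2 = 1) (hx : x ∈ Subgroup.zpowers z) :
    x = 1 ∨ x = z := by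
  obtain ⟨k, rfl⟩ := hx
  have hz' : z ^ (2 : ℤ) = 1 := by
    rw [show (2 : ℤ) = ((2 : ℕ) : ℤ) by norm_num, zpow_natCast, hz]
  have key : z ^ k = z ^ (k % 2) := by
    conv_lhs => rw [← Int.mul_ediv_add_emod k 2]
    rw [zpow_add, zpow_mul, hz', one_zpow, one_mul]
  rcases Int.emod_two_eq k with h | h
  · left; show z ^ k = 1; rw [key, h, zpow_zero]
  · right; show z ^ k = z; rw [key, h, zpow_one]

lemma epg_star_adj (h2 : ∀ x : G, x ≠ 1 → orderOf x = 2) {u v : G}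
    (h : (enhancedPowerGraph G).Adj u v) : u = 1 ∨ v = 1 := by
  obtain ⟨hne, z, hu, hv⟩ := epg_adj_iff.mp h
  by_cases hz : z = 1
  · subst hz
    simp only [Subgroup.zpowers_one_eq_bot, Subgroup.mem_bot] at hu
    exact Or.inl hu
  · have hz2 : z ^ 2 = 1 := by
      have := h2 z hz
      rw [← this]
      exact pow_orderOf_eq_one z
    rcases mem_zpowers_sq hz2 hu with h1 | h1
    · exact Or.inl h1
    · rcases mem_zpowers_sq hz2 hv with h3 | h3
      · exact Or.inr h3
      · exact absurd (h1.trans h3.symm) hne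

lemma epg_vc_pos (hx : ∃ x : G, x ≠ 1) : 1 ≤ vertexConn (enhancedPowerGraph G) := by
  obtain ⟨x, hx⟩ := hx
  have hcard : 2 ≤ Nat.card G := by
    have h := Set.ncard_le_ncard (Set.subset_univ ({x, 1} : Set G)) (Set.toFinite _)
    rw [Set.ncard_univ, Set.ncard_pair hx] at h
    exact h
  have hmem := Nat.sInf_mem (cutSet_nonempty (enhancedPowerGraph G))
  rw [vertexConn_eq]
  rcases Nat.eq_zero_or_pos (sInf (cutSet (enhancedPowerGraph G))) with h | h
  swap
  · exact h
  exfalso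
  rw [h] at hmem
  obtain ⟨S, hS0, hne, hcond⟩ := hmem
  have hSempty : S = ∅ := (Set.ncard_eq_zero (Set.toFinite _)).mp hS0
  subst hSempty
  rw [Set.compl_empty] at hne hcond
  rcases hcond with hc | hc
  · exact hc epg_induce_univ_preconnected
  · rw [Set.ncard_univ] at hc; omega

lemma epg_star_vc (h2 : ∀ x : G, x ≠ 1 → orderOf x = 2) (hx : ∃ x : G, x ≠ 1) :
    vertexConn (enhancedPowerGraph G) = 1 := by
  have hub : vertexConn (enhancedPowerGraph G) ≤ 1 := by
    rw [vertexConn_eq]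
    apply Nat.sInf_le
    obtain ⟨x, hx1⟩ := hx
    refine ⟨{1}, Set.ncard_singleton 1, ⟨x, hx1⟩, ?_⟩
    by_cases hone : (({1} : Set G)ᶜ).ncard = 1
    · exact Or.inr hone
    · refine Or.inl fun hpre => ?_
      -- there are at least two non-identity elements
      have hmulti : 2 ≤ (({1} : Set G)ᶜ).ncard := by
        have h0 : (({1} : Set G)ᶜ).ncard ≠ 0 := by
          intro hc
          rw [Set.ncard_eq_zero (Set.toFinite _)] at hc
          exact (hc ▸ hx1 : x ∈ (∅ : Set G)).elim
        omega
      obtain ⟨a, b, ha, hb, hab⟩ := (Set.one_lt_ncard_iff (Set.toFinite _)).mp hmulti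
      have := hpre ⟨a, ha⟩ ⟨b, hb⟩
      have heq : a = b := by
        refine congrArg Subtype.val (isolated_reach
          (x := (⟨a, ha⟩ : (({1} : Set G)ᶜ : Set G))) ?_ this)
        rintro ⟨w, hw⟩ hadj
        simp only [comap_adj, Function.Embedding.coe_subtype] at hadj
        rcases epg_star_adj h2 hadj with h1 | h1
        · exact ha h1
        · exact hw h1
      exact hab heq
  have h1 := epg_vc_pos hx
  omega

lemma epg_star_delete (h2 : ∀ x : G, x ≠ 1 → orderOf x = 2) {x : G} (hx : x ≠ 1) :
    vertexConn ((enhancedPowerGraph G).deleteEdges {s(1, x)}) = 0 := by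
  rw [vertexConn_eq]
  rw [Nat.sInf_eq_zero]
  left
  refine ⟨∅, Set.ncard_empty G, by rw [Set.compl_empty]; exact Set.univ_nonempty, Or.inl ?_⟩
  intro hpre
  rw [Set.compl_empty] at hpre
  have := hpre ⟨x, Set.mem_univ x⟩ ⟨1, Set.mem_univ 1⟩
  have heq : x = 1 := by
    refine congrArg Subtype.val (isolated_reach
      (x := (⟨x, Set.mem_univ x⟩ : (Set.univ : Set G))) ?_ this)
    rintro ⟨w, hw⟩ hadj
    simp only [comap_adj, Function.Embedding.coe_subtype, deleteEdges_adj,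
      Set.mem_singleton_iff] at hadj
    obtain ⟨hadj1, hadj2⟩ := hadj
    rcases epg_star_adj h2 hadj1 with h1 | h1
    · exact hx h1
    · subst h1
      exact hadj2 (Sym2.eq_swap)
  exact hx heq

end Star

section NonCyclic
set_option linter.unusedSectionVars false
variable {G : Type*} [Group G] [Fintype G]

lemma epg_vc_delete_eq (hnc : ¬ IsCyclic G) {a : G} (ha2 : a ≠ a⁻¹) :
    vertexConn ((enhancedPowerGraph G).deleteEdges {s(a, a⁻¹)}) =
      vertexConn (enhancedPowerGraph G) := by
  set H := enhancedPowerGraph G with hH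
  set e := s(a, a⁻¹) with he
  refine le_antisymm (vertexConn_deleteEdges_le _ _) ?_
  rw [vertexConn_eq, vertexConn_eq]
  obtain ⟨S, hScard, hSne, hScond⟩ := Nat.sInf_mem (cutSet_nonempty (H.deleteEdges {e}))
  rw [← hScard]
  rcases hScond with hnp | h1
  swap
  · exact Nat.sInf_le ⟨S, rfl, hSne, Or.inr h1⟩
  by_cases hmemA : a ∈ Sᶜ ∧ a⁻¹ ∈ Sᶜ
  swap
  · -- the deleted edge is not inside Sᶜ
    refine Nat.sInf_le ⟨S, rfl, hSne, Or.inl fun hpre => hnp fun u v => ?_⟩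
    refine Reachable.mono (fun p q hpq => ?_) (hpre u v)
    simp only [comap_adj, Function.Embedding.coe_subtype, deleteEdges_adj,
      Set.mem_singleton_iff] at hpq ⊢
    refine ⟨hpq, fun hc => hmemA ?_⟩
    rcases Sym2.eq_iff.mp (he ▸ hc) with ⟨h1, h2⟩ | ⟨h1, h2⟩
    · exact ⟨h1 ▸ p.2, h2 ▸ q.2⟩
    · exact ⟨h2 ▸ q.2, h1 ▸ p.2⟩
  obtain ⟨haS, haiS⟩ := hmemA
  by_cases hreach : ((H.deleteEdges {e}).induce Sᶜ).Reachable ⟨a, haS⟩ ⟨a⁻¹, haiS⟩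
  · -- reroute the deleted edge through the existing path
    refine Nat.sInf_le ⟨S, rfl, hSne, Or.inl fun hpre => hnp fun u v => ?_⟩
    refine reach_of_reach (fun p q hpq => ?_) (hpre u v)
    simp only [comap_adj, Function.Embedding.coe_subtype] at hpq
    by_cases hc : s((p : G), (q : G)) = e
    · rcases Sym2.eq_iff.mp (he ▸ hc) with ⟨h1, h2⟩ | ⟨h1, h2⟩
      · have hp : p = ⟨a, haS⟩ := Subtype.ext h1
        have hq : q = ⟨a⁻¹, haiS⟩ := Subtype.ext h2
        rw [hp, hq]; exact hreach
      · have hp : p = ⟨a⁻¹, haiS⟩ := Subtype.ext h1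
        have hq : q = ⟨a, haS⟩ := Subtype.ext h2
        rw [hp, hq]; exact hreach.symm
    · refine Adj.reachable ?_
      simp only [comap_adj, Function.Embedding.coe_subtype, deleteEdges_adj,
        Set.mem_singleton_iff]
      exact ⟨hpq, hc⟩
  · -- a and a⁻¹ have no common neighbour inside Sᶜ
    have hno : ∀ v : G, v ∈ Sᶜ → v ≠ a → v ≠ a⁻¹ → ¬ H.Adj a v := by
      intro v hv hv1 hv2 hadj
      apply hreach
      have hadj' : H.Adj a⁻¹ v := epg_adj_inv hadj (fun hc => hv2 hc.symm)
      have e1 : ((H.deleteEdges {e}).induce Sᶜ).Adj ⟨a, haS⟩ ⟨v, hv⟩ := by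
        simp only [comap_adj, Function.Embedding.coe_subtype, deleteEdges_adj,
          Set.mem_singleton_iff]
        refine ⟨hadj, fun hc => ?_⟩
        rcases Sym2.eq_iff.mp (he ▸ hc) with ⟨-, h2⟩ | ⟨h1, -⟩
        · exact hv2 h2
        · exact ha2 h1
      have e2 : ((H.deleteEdges {e}).induce Sᶜ).Adj ⟨v, hv⟩ ⟨a⁻¹, haiS⟩ := by
        simp only [comap_adj, Function.Embedding.coe_subtype, deleteEdges_adj,
          Set.mem_singleton_iff]
        refine ⟨hadj'.symm, fun hc => ?_⟩
        rcases Sym2.eq_iff.mp (he ▸ hc) with ⟨h1, -⟩ | ⟨h2, -⟩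
        · exact hv1 h1
        · exact hv2 h2
      exact e1.reachable.trans e2.reachable
    by_cases hthird : ∃ w ∈ Sᶜ, w ≠ a ∧ w ≠ a⁻¹
    · obtain ⟨w, hwS, hw1, hw2⟩ := hthird
      refine Nat.sInf_le ⟨S, rfl, hSne, Or.inl fun hpre => ?_⟩
      have hr := hpre ⟨a, haS⟩ ⟨w, hwS⟩
      have hclosed : ∀ x y : ↥(Sᶜ), ((x : G) = a ∨ (x : G) = a⁻¹) →
          (H.induce Sᶜ).Adj x y → ((y : G) = a ∨ (y : G) = a⁻¹) := by
        rintro u v hu hadj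
        simp only [comap_adj, Function.Embedding.coe_subtype] at hadj
        by_contra hv
        push_neg at hv
        rcases hu with hu | hu
        · exact hno v v.2 hv.1 hv.2 (hu ▸ hadj)
        · have hAa : H.Adj a ↑v := by
            have h' : H.Adj a⁻¹ ↑v := hu ▸ hadj
            have h'' := epg_adj_inv h' (by rw [inv_inv]; exact fun hc => hv.1 hc.symm)
            rwa [inv_inv] at h''
          exact hno v v.2 hv.1 hv.2 hAa
      rcases reach_closed hclosed hr (Or.inl rfl) with h | h
      · exact hw1 h
      · exact hw2 h
    · push_neg at hthird
      have hSc : Sᶜ = {a, a⁻¹} := by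
        apply Set.eq_of_subset_of_subset
        · intro w hw
          simp only [Set.mem_insert_iff, Set.mem_singleton_iff]
          by_cases h1 : w = a
          · exact Or.inl h1
          · exact Or.inr (hthird w hw h1)
        · intro w hw
          simp only [Set.mem_insert_iff, Set.mem_singleton_iff] at hw
          rcases hw with rfl | rfl
          · exact haS
          · exact haiS
      obtain ⟨u, v, huv, hnadj⟩ := exists_nonadj hnc
      have hT : ({u, v}ᶜ : Set G).ncard = S.ncard := by
        rw [ncard_compl_pair huv, ncard_compl_eq (S := S), hSc, Set.ncard_pair ha2]
      refine Nat.sInf_le ⟨({u, v} : Set G)ᶜ, hT, ?_, Or.inl ?_⟩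
      · rw [compl_compl]; exact ⟨u, by simp⟩
      · intro hpre
        have hu' : u ∈ (({u, v} : Set G)ᶜᶜ) := by simp
        have hv' : v ∈ (({u, v} : Set G)ᶜᶜ) := by simp
        have hr := hpre ⟨u, hu'⟩ ⟨v, hv'⟩
        have heq : u = v := by
          refine congrArg Subtype.val (isolated_reach (x := ⟨u, hu'⟩) ?_ hr)
          rintro ⟨w, hw⟩ hadj
          simp only [comap_adj, Function.Embedding.coe_subtype] at hadj
          simp only [compl_compl, Set.mem_insert_iff, Set.mem_singleton_iff] at hw
          rcases hw with rfl | rfl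
          · exact hadj.ne rfl
          · exact hnadj hadj
        exact huv heq

end NonCyclic

/-- For a finite group `G`, the enhanced power graph is minimally
connected iff `G` is cyclic or `G` is an elementary abelian `2`-group. -/
theorem stmt_7 (G : Type*) [Group G] [Fintype G] :
    MinConnected (enhancedPowerGraph G) ↔
      (IsCyclic G ∨ ∀ x : G, x ≠ 1 → orderOf x = 2) := by
  constructor
  · intro hmc
    by_contra hcon
    push_neg at hcon
    obtain ⟨hnc, x, hx1, hx2⟩ := hcon
    have hxin : x ≠ x⁻¹ := by
      intro h
      have hsq : x ^ 2 = 1 := by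
        rw [pow_two]
        nth_rewrite 2 [h]
        exact mul_inv_cancel x
      have hdvd : orderOf x ∣ 2 := orderOf_dvd_of_pow_eq_one hsq
      have hpos : 0 < orderOf x := orderOf_pos x
      have hne1 : orderOf x ≠ 1 := fun hc => hx1 (orderOf_eq_one_iff.mp hc)
      rcases (Nat.dvd_prime Nat.prime_two).mp hdvd with h | h
      · exact hne1 h
      · exact hx2 h
    have hadj : (enhancedPowerGraph G).Adj x x⁻¹ :=
      epg_adj_iff.mpr ⟨hxin, x, Subgroup.mem_zpowers x,
        (Subgroup.zpowers x).inv_mem (Subgroup.mem_zpowers x)⟩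
    have hedge : s(x, x⁻¹) ∈ (enhancedPowerGraph G).edgeSet := hadj
    have h1 := hmc _ hedge
    rw [epg_vc_delete_eq hnc hxin] at h1
    have h2 := epg_vc_pos ⟨x, hx1⟩
    omega
  · rintro (hcyc | h2)
    · intro e he
      induction e using Sym2.ind with
      | _ u v =>
        have hadj : (enhancedPowerGraph G).Adj u v := he
        have huv : u ≠ v := hadj.ne
        have hcard : 2 ≤ Nat.card G := by
          have h := Set.ncard_le_ncard (Set.subset_univ ({u, v} : Set G)) (Set.toFinite _)
          rw [Set.ncard_univ, Set.ncard_pair huv] at h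
          exact h
        rw [vertexConn_complete_delete (fun p q hpq => epg_complete_of_cyclic hcyc hpq) huv,
          vertexConn_complete (fun p q hpq => epg_complete_of_cyclic hcyc hpq)]
        omega
    · intro e he
      induction e using Sym2.ind with
      | _ u v =>
        have hadj : (enhancedPowerGraph G).Adj u v := he
        have huv : u ≠ v := hadj.ne
        rcases epg_star_adj h2 hadj with rfl | rfl
        · have hv : v ≠ 1 := fun hc => huv hc.symm
          rw [epg_star_delete h2 hv, epg_star_vc h2 ⟨v, hv⟩]
        · have hu : u ≠ 1 := huv
          rw [show s(u, (1 : G)) = s((1 : G), u) from Sym2.eq_swap,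
            epg_star_delete h2 hu, epg_star_vc h2 ⟨u, hu⟩]
end
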